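/- arXiv:1304.3528 — 11 statements merged into one kernel-verified Lean document; each statement's English description precedes it below -/
import Mathlib

section
/- For a nonnegative solution of x_n = (Σ_{i=1}^k β_i x_{n-i}) / (A + Σ_{j=1}^k B_j x_{n-j}) with A ≥ Σ_{i=1}^k β_i > 0, setting g = gcd(I_β) and ρ = ⌊k/g⌋, the sequence y^a_m = max_{ℓ=1..ρ} x_{(m-ℓ)g + a} is monotone nonincreasing in m for each residue a; in particular each y^a_m converges. -/
/-!
Every solution is nonnegative, and since `A ≥ ∑ βᵢ` the right-hand side of the recursion is
at most `max {x_{n-i} : βᵢ > 0}`. The lags `i` with `βᵢ > 0` are multiples `ℓ g` with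
`1 ≤ ℓ ≤ ρ`, so `x_{mg+a}` is bounded by the window maximum `y^a_m` of the previous `ρ` terms
of the residue class `a + gℤ`. Sliding the window by one step therefore cannot increase
its maximum, and a nonincreasing sequence of nonnegative reals converges.
-/

open Filter Topology Finset

def SatisfiesRecursion (k : ℕ) (A : ℝ) (β B : ℕ → ℝ) (x : ℤ → ℝ) : Prop :=
  ∀ n : ℤ, 1 ≤ n → x n =
    (∑ i ∈ Icc 1 k, β i * x (n - i)) / (A + ∑ j ∈ Icc 1 k, B j * x (n - j))

section Recursion

variable {k : ℕ} {A : ℝ} {β B : ℕ → ℝ} {x : ℤ → ℝ}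

theorem SatisfiesRecursion.nonneg (hrec : SatisfiesRecursion k A β B x)
    (hβ : ∀ i, 0 ≤ β i) (hB : ∀ j, 0 ≤ B j) (hA : 0 ≤ A)
    (hx0 : ∀ n : ℤ, n ≤ 0 → 0 ≤ x n) (n : ℤ) : 0 ≤ x n := by
  induction n using Int.strongRec (m := 1) with
  | lt n hn => exact hx0 n (by omega)
  | ge n hn ih =>
    have hprev : ∀ i ∈ Icc 1 k, 0 ≤ x (n - i) := fun i hi ↦
      ih _ (by have := (mem_Icc.mp hi).1; omega)
    rw [hrec n hn]
    exact div_nonneg (sum_nonneg fun i hi ↦ mul_nonneg (hβ i) (hprev i hi))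
      (add_nonneg hA (sum_nonneg fun j hj ↦ mul_nonneg (hB j) (hprev j hj)))

theorem SatisfiesRecursion.le_of_forall_lag_le (hrec : SatisfiesRecursion k A β B x)
    (hβ : ∀ i, 0 ≤ β i) (hB : ∀ j, 0 ≤ B j) (hAβ : ∑ i ∈ Icc 1 k, β i ≤ A)
    (hxnn : ∀ n, 0 ≤ x n) {n : ℤ} (hn : 1 ≤ n) {M : ℝ} (hM : 0 ≤ M)
    (hlag : ∀ i ∈ Icc 1 k, 0 < β i → x (n - i) ≤ M) : x n ≤ M := by
  have hterm : ∀ i ∈ Icc 1 k, β i * x (n - i) ≤ β i * M := fun i hi ↦ by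
    rcases (hβ i).lt_or_eq with hβi | hβi
    · exact mul_le_mul_of_nonneg_left (hlag i hi hβi) (hβ i)
    · simp [← hβi]
  have hden : 0 ≤ ∑ j ∈ Icc 1 k, B j * x (n - j) :=
    sum_nonneg fun j _ ↦ mul_nonneg (hB j) (hxnn _)
  have hA : 0 ≤ A := (sum_nonneg fun i _ ↦ hβ i).trans hAβ
  rw [hrec n hn]
  refine div_le_of_le_mul₀ (add_nonneg hA hden) hM ?_
  calc ∑ i ∈ Icc 1 k, β i * x (n - i)
      ≤ ∑ i ∈ Icc 1 k, β i * M := sum_le_sum hterm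
    _ = (∑ i ∈ Icc 1 k, β i) * M := (sum_mul ..).symm
    _ ≤ A * M := mul_le_mul_of_nonneg_right hAβ hM
    _ ≤ M * (A + ∑ j ∈ Icc 1 k, B j * x (n - j)) := by nlinarith

end Recursion

theorem div_mem_Icc_of_dvd {g i k : ℕ} (hgi : g ∣ i) (hi : i ∈ Icc 1 k) :
    i / g ∈ Set.Icc 1 (k / g) := by
  obtain ⟨hi1, hik⟩ := mem_Icc.mp hi
  have hg : 0 < g := Nat.pos_of_dvd_of_pos hgi hi1
  exact ⟨(Nat.one_le_div_iff hg).mpr (Nat.le_of_dvd hi1 hgi), Nat.div_le_div_right hik⟩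

/-- The paper's `y^a_m` is `windowMax (fun n ↦ x (n * g + a)) ρ m`. -/
noncomputable def windowMax (z : ℤ → ℝ) (ρ : ℕ) (m : ℤ) : ℝ :=
  sSup ((fun ℓ : ℕ ↦ z (m - ℓ)) '' Set.Icc 1 ρ)

section WindowMax

variable {z : ℤ → ℝ} {ρ : ℕ} {m : ℤ}

theorem le_windowMax {ℓ : ℕ} (hℓ : ℓ ∈ Set.Icc 1 ρ) : z (m - ℓ) ≤ windowMax z ρ m :=
  le_csSup ((Set.finite_Icc 1 ρ).image _).bddAbove (Set.mem_image_of_mem _ hℓ)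

theorem windowMax_succ_le (hρ : 1 ≤ ρ) (hz : z m ≤ windowMax z ρ m) :
    windowMax z ρ (m + 1) ≤ windowMax z ρ m := by
  refine csSup_le (Set.Nonempty.image _ ⟨1, le_rfl, hρ⟩) ?_
  rintro _ ⟨ℓ, ⟨hℓ1, hℓρ⟩, rfl⟩
  rcases hℓ1.eq_or_lt with rfl | hℓ2
  · simpa using hz
  · have hshift : m + 1 - ℓ = m - ((ℓ - 1 : ℕ) : ℤ) := by
      push_cast [Nat.cast_sub hℓ1]; ring
    simpa only [hshift] using
      le_windowMax (z := z) (m := m) ⟨Nat.le_sub_one_of_lt hℓ2, by omega⟩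

end WindowMax

theorem aux_sequence_monotone_general (k : ℕ) (A : ℝ) (β B : ℕ → ℝ)
    (hβ : ∀ i, 0 ≤ β i) (hB : ∀ j, 0 ≤ B j)
    (hsum : 0 < ∑ i ∈ Finset.Icc 1 k, β i)
    (hAβ : ∑ i ∈ Finset.Icc 1 k, β i ≤ A)
    (x : ℤ → ℝ) (hx0 : ∀ n : ℤ, n ≤ 0 → 0 ≤ x n)
    (hrec : ∀ n : ℤ, 1 ≤ n → x n =
      (∑ i ∈ Finset.Icc 1 k, β i * x (n - (i : ℤ))) /
      (A + ∑ j ∈ Finset.Icc 1 k, B j * x (n - (j : ℤ))))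
    (g ρ : ℕ)
    (hg : g = ((Finset.Icc 1 k).filter (fun i => 0 < β i)).gcd id)
    (hρ : ρ = k / g)
    (Y : ℤ → ℕ → ℝ)
    (hY : ∀ a : ℤ, ∀ m : ℕ,
      Y a m = sSup ((fun ℓ : ℕ => x (((m : ℤ) - (ℓ : ℤ)) * (g : ℤ) + a)) '' Set.Icc 1 ρ)) :
    ∀ a : ℤ, 1 ≤ a → (∀ m : ℕ, Y a (m + 1) ≤ Y a m) ∧
      ∃ L : ℝ, Tendsto (fun m : ℕ => Y a m) atTop (𝓝 L) := by
  intro a ha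
  have hsol : SatisfiesRecursion k A β B x := hrec
  have hxnn := hsol.nonneg hβ hB ((sum_nonneg fun i _ ↦ hβ i).trans hAβ) hx0
  have hlag : ∀ i ∈ Icc 1 k, 0 < β i → ∃ ℓ ∈ Set.Icc 1 ρ, i = ℓ * g := fun i hi hβi ↦
    have hgi : g ∣ i := hg ▸ Finset.gcd_dvd (mem_filter.mpr ⟨hi, hβi⟩)
    ⟨i / g, hρ ▸ div_mem_Icc_of_dvd hgi hi, (Nat.div_mul_cancel hgi).symm⟩
  obtain ⟨i₀, hi₀, hβi₀⟩ := exists_lt_of_sum_lt (f := fun _ ↦ 0) (g := β)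
    (by simpa using hsum)
  obtain ⟨ℓ₀, ⟨hℓ₀1, hℓ₀ρ⟩, -⟩ := hlag i₀ hi₀ hβi₀
  have hρ1 : 1 ≤ ρ := hℓ₀1.trans hℓ₀ρ
  set z : ℤ → ℝ := fun n ↦ x (n * g + a)
  have hYz : ∀ m : ℕ, Y a m = windowMax z ρ m := hY a
  have hWnn : ∀ m : ℕ, 0 ≤ windowMax z ρ m := fun m ↦
    (hxnn _).trans (le_windowMax (z := z) ⟨le_rfl, hρ1⟩)
  have hnext : ∀ m : ℕ, z m ≤ windowMax z ρ m := by
    intro m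
    refine hsol.le_of_forall_lag_le hβ hB hAβ hxnn (n := m * g + a) (by nlinarith) (hWnn m) ?_
    rintro i hi hβi
    obtain ⟨ℓ, hℓ, rfl⟩ := hlag i hi hβi
    convert le_windowMax (z := z) (m := m) hℓ using 2
    push_cast; ring
  have hmono : ∀ m : ℕ, Y a (m + 1) ≤ Y a m := fun m ↦ by
    simpa only [hYz, Nat.cast_succ] using windowMax_succ_le hρ1 (hnext m)
  exact ⟨hmono, _, tendsto_atTop_ciInf (antitone_nat_of_succ_le hmono) ⟨0, by
    rintro _ ⟨m, rfl⟩; exact (hWnn m).trans (hYz m).ge⟩⟩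

/-- For a nonnegative solution of `xₙ = (∑ βᵢ x_{n-i})/(A + ∑ Bⱼ x_{n-j})` with
`A ≥ ∑ βᵢ > 0`, the auxiliary sequence `y^a_m = max_{ℓ=1..ρ} x_{(m-ℓ)g+a}`
(with `g = gcd I_β`, `ρ = ⌊k/g⌋`) is nonincreasing in `m` and converges. -/
theorem aux_sequence_monotone (k : ℕ) (hk : 1 ≤ k) (A : ℝ) (β B : ℕ → ℝ)
    (hβ : ∀ i, 0 ≤ β i) (hB : ∀ j, 0 ≤ B j) (hA : 0 < A)
    (hsum : 0 < ∑ i ∈ Finset.Icc 1 k, β i)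
    (hAβ : ∑ i ∈ Finset.Icc 1 k, β i ≤ A)
    (x : ℤ → ℝ) (hx0 : ∀ n : ℤ, n ≤ 0 → 0 ≤ x n)
    (hrec : ∀ n : ℤ, 1 ≤ n → x n =
      (∑ i ∈ Finset.Icc 1 k, β i * x (n - (i : ℤ))) /
      (A + ∑ j ∈ Finset.Icc 1 k, B j * x (n - (j : ℤ))))
    (g ρ : ℕ)
    (hg : g = ((Finset.Icc 1 k).filter (fun i => 0 < β i)).gcd id)
    (hρ : ρ = k / g)
    (Y : ℤ → ℕ → ℝ)
    (hY : ∀ a : ℤ, ∀ m : ℕ,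
      Y a m = sSup ((fun ℓ : ℕ => x (((m : ℤ) - (ℓ : ℤ)) * (g : ℤ) + a)) '' Set.Icc 1 ρ)) :
    ∀ a : ℤ, 1 ≤ a → (∀ m : ℕ, Y a (m + 1) ≤ Y a m) ∧
      ∃ L : ℝ, Tendsto (fun m : ℕ => Y a m) atTop (𝓝 L) :=
  aux_sequence_monotone_general k A β B hβ hB hsum hAβ x hx0 hrec g ρ hg hρ Y hY
end

section
/- Every nonnegative solution of x_n = (Σ_{i=1}^k β_i x_{n-i}) / (A + Σ_{j=1}^k B_j x_{n-j}) with A ≥ Σ_{i=1}^k β_i > 0 converges to a periodic solution of (not necessarily prime) period g = gcd(I_β); i.e., for each residue a mod g the subsequence (x_{mg+a})_m converges. -/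
open Filter Topology

/-!
Fix `a` and put `f m = x (m g + a)`. Every lag `i` with `β i > 0` is a multiple of `g`, so late
terms satisfy `f m ≤ ∑ (β i / A) f (m - i / g)`, with weights summing to at most `1` and
lags `i / g` of gcd `1`. Hence each late term is at most one of its `K` predecessors, so the
maxima of `f` over windows of length `K` decrease to a limit `S`, and eventually `f ≤ S + ε`.
Conversely, as the weights sum to at most `1`, a term close to `S` forces each of its lagged
predecessors to be close to `S`. This is inherited along sums of lags, hence along every large
enough lag. Each late index lies a large lag before some window maximum, which is `≥ S`, so
`f → S`.
-/

def propagatingLags (f : ℕ → ℝ) (S : ℝ) : AddSubmonoid ℕ where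
  carrier := {t | ∀ ε > 0, ∃ δ > 0, ∀ᶠ n in atTop, S - δ ≤ f n → S - ε ≤ f (n - t)}
  zero_mem' ε hε := ⟨ε, hε, .of_forall fun n h => by simpa using h⟩
  add_mem' {t₁ t₂} h₁ h₂ ε hε := by
    obtain ⟨δ₂, hδ₂, H₂⟩ := h₂ ε hε
    obtain ⟨δ₁, hδ₁, H₁⟩ := h₁ δ₂ hδ₂
    refine ⟨δ₁, hδ₁, ?_⟩
    filter_upwards [H₁, (tendsto_sub_atTop_nat t₁).eventually H₂] with n h₁ h₂ hn
    rw [Nat.sub_add_eq]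
    exact h₂ (h₁ hn)

theorem sum_mul_le_of_sum_le_one {ι : Type*} {s : Finset ι} {c a : ι → ℝ} {b : ℝ}
    (hc : ∀ i ∈ s, 0 ≤ c i) (hcs : ∑ i ∈ s, c i ≤ 1) (ha : ∀ i ∈ s, a i ≤ b) (hb : 0 ≤ b) :
    ∑ i ∈ s, c i * a i ≤ b :=
  calc ∑ i ∈ s, c i * a i ≤ ∑ i ∈ s, c i * b :=
        Finset.sum_le_sum fun i hi => mul_le_mul_of_nonneg_left (ha i hi) (hc i hi)
    _ = (∑ i ∈ s, c i) * b := (Finset.sum_mul ..).symm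
    _ ≤ b := mul_le_of_le_one_left hb hcs

/-- `S` is the limit of the nonincreasing maxima of `f` over the windows `[N + m, N + m + K)`. -/
theorem exists_window_limit {f : ℕ → ℝ} {N K : ℕ} (hf : ∀ n, 0 ≤ f n)
    (hle : ∀ n ≥ N, ∃ j ∈ Finset.Icc 1 K, f n ≤ f (n - j)) :
    ∃ S, 0 ≤ S ∧ (∀ m ≥ N, ∃ j < K, S ≤ f (m + j)) ∧ ∀ ε > 0, ∀ᶠ n in atTop, f n ≤ S + ε := by
  have hK : 0 < K := by
    obtain ⟨j, hj, -⟩ := hle N le_rfl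
    rw [Finset.mem_Icc] at hj
    omega
  have hne : (Finset.range K).Nonempty := Finset.nonempty_range_iff.2 hK.ne'
  set V : ℕ → ℝ := fun m => (Finset.range K).sup' hne fun j => f (N + m + j)
  have le_V : ∀ m, ∀ j < K, f (N + m + j) ≤ V m := fun m j hj =>
    Finset.le_sup' (fun j => f (N + m + j)) (Finset.mem_range.2 hj)
  have hV : Antitone V := antitone_nat_of_succ_le fun m => Finset.sup'_le _ _ fun j hj => by
    rw [Finset.mem_range] at hj
    rcases Nat.lt_or_ge (j + 1) K with hj' | hj'
    · rw [show N + (m + 1) + j = N + m + (j + 1) by omega]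
      exact le_V m _ hj'
    · obtain ⟨i, hi, hfi⟩ := hle (N + m + K) (by omega)
      rw [Finset.mem_Icc] at hi
      rw [show N + (m + 1) + j = N + m + K by omega]
      refine hfi.trans ?_
      rw [show N + m + K - i = N + m + (K - i) by omega]
      exact le_V m _ (by omega)
  have hV0 : ∀ m, 0 ≤ V m := fun m => (hf _).trans (le_V m 0 hK)
  have hbdd : BddBelow (Set.range V) := ⟨0, Set.forall_mem_range.2 hV0⟩
  refine ⟨⨅ m, V m, le_ciInf hV0, fun m hm => ?_, fun ε hε => ?_⟩
  · obtain ⟨j, hj, hmax⟩ := Finset.exists_mem_eq_sup' hne fun j => f (N + (m - N) + j)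
    refine ⟨j, Finset.mem_range.1 hj, ?_⟩
    rw [show m + j = N + (m - N) + j by omega, ← hmax]
    exact ciInf_le hbdd (m - N)
  · have hVε := (tendsto_atTop_ciInf hV hbdd).eventually
      (eventually_le_nhds (lt_add_of_pos_right _ hε))
    filter_upwards [(tendsto_sub_atTop_nat N).eventually hVε, eventually_ge_atTop N] with n hn hNn
    refine le_trans ?_ hn
    simpa [Nat.add_sub_cancel' hNn] using le_V (n - N) 0 hK

theorem mem_propagatingLags {ι : Type*} {s : Finset ι} {c : ι → ℝ} {e : ι → ℕ} {f : ℕ → ℝ}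
    {S : ℝ} (hc : ∀ i ∈ s, 0 < c i) (hcs : ∑ i ∈ s, c i ≤ 1) (hS : 0 ≤ S)
    (hrec : ∀ᶠ n in atTop, f n ≤ ∑ i ∈ s, c i * f (n - e i))
    (hup : ∀ ε > 0, ∀ᶠ n in atTop, f n ≤ S + ε) {i₀ : ι} (hi₀ : i₀ ∈ s) :
    e i₀ ∈ propagatingLags f S := by
  classical
  intro ε hε
  have hc₀ := hc i₀ hi₀
  set δ := c i₀ * ε / 2
  have hδ : 0 < δ := by positivity
  refine ⟨δ, hδ, ?_⟩
  have hlags : ∀ᶠ n in atTop, ∀ i ∈ s, f (n - e i) ≤ S + δ := (s.eventually_all).2 fun i _ =>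
    (tendsto_sub_atTop_nat (e i)).eventually (hup δ hδ)
  filter_upwards [hrec, hlags] with n hn hlagn hSn
  have hrest : ∑ i ∈ s.erase i₀, c i * f (n - e i) ≤ (1 - c i₀) * (S + δ) := by
    calc ∑ i ∈ s.erase i₀, c i * f (n - e i) ≤ (∑ i ∈ s.erase i₀, c i) * (S + δ) := by
          rw [Finset.sum_mul]
          exact Finset.sum_le_sum fun i hi => mul_le_mul_of_nonneg_left
            (hlagn i (Finset.mem_of_mem_erase hi)) (hc i (Finset.mem_of_mem_erase hi)).le
      _ ≤ (1 - c i₀) * (S + δ) := by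
          gcongr
          linarith [Finset.add_sum_erase s c hi₀]
  have hsplit := Finset.add_sum_erase s (fun i => c i * f (n - e i)) hi₀
  have : c i₀ * (S - ε) ≤ c i₀ * f (n - e i₀) := by
    have : 0 ≤ c i₀ * δ := by positivity
    have : 2 * δ = c i₀ * ε := by ring
    linarith
  exact le_of_mul_le_mul_left this hc₀

theorem exists_forall_ge_mem_of_gcd_eq_one {ι : Type*} {s : Finset ι} {e : ι → ℕ}
    (hgcd : s.gcd e = 1) {M : AddSubmonoid ℕ} (hM : ∀ i ∈ s, e i ∈ M) :
    ∃ T, ∀ t ≥ T, t ∈ M := by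
  obtain ⟨T, hT⟩ := Nat.exists_mem_closure_of_ge (e '' s)
  have hdvd : Nat.setGcd (e '' s) ∣ 1 :=
    hgcd ▸ Finset.dvd_gcd fun i hi => Nat.setGcd_dvd_of_mem ⟨i, hi, rfl⟩
  refine ⟨T, fun t ht => AddSubmonoid.closure_le.2 ?_ (hT t ht (hdvd.trans (one_dvd t)))⟩
  rintro _ ⟨i, hi, rfl⟩
  exact hM i hi

/-- Every late `n` lies a lag in `[T, T + K)` before an anchor `m + j` with `S ≤ f (m + j)`. -/
theorem tendsto_of_forall_ge_mem_propagatingLags {f : ℕ → ℝ} {S : ℝ} {N K T : ℕ}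
    (hanchor : ∀ m ≥ N, ∃ j < K, S ≤ f (m + j))
    (hup : ∀ ε > 0, ∀ᶠ n in atTop, f n ≤ S + ε)
    (hT : ∀ t ≥ T, t ∈ propagatingLags f S) : Tendsto f atTop (𝓝 S) := by
  refine tendsto_order.2 ⟨fun a ha => ?_, fun a ha => ?_⟩
  · have hε : 0 < S - a := by linarith
    have hlag : ∀ j ∈ Finset.range K, ∀ᶠ n in atTop, S ≤ f n → S - (S - a) / 2 ≤ f (n - (T + j)) :=
      fun j _ => by
        obtain ⟨δ, hδ, h⟩ := hT (T + j) (by omega) ((S - a) / 2) (by linarith)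
        exact h.mono fun n hn hSn => hn (by linarith)
    obtain ⟨N', hN'⟩ := eventually_atTop.1 ((Finset.range K).eventually_all.2 hlag)
    filter_upwards [eventually_ge_atTop (N + N')] with n hn
    obtain ⟨j, hj, hSj⟩ := hanchor (n + T) (by omega)
    have := hN' (n + T + j) (by omega) j (Finset.mem_range.2 hj) hSj
    rw [show n + T + j - (T + j) = n by omega] at this
    linarith
  · filter_upwards [hup ((a - S) / 2) (by linarith)] with n hn
    linarith

theorem exists_tendsto_of_le_sum_mul_lag {ι : Type*} {s : Finset ι} {c : ι → ℝ} {e : ι → ℕ}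
    {f : ℕ → ℝ} {N : ℕ} (hf : ∀ n, 0 ≤ f n) (hc : ∀ i ∈ s, 0 < c i) (hcs : ∑ i ∈ s, c i ≤ 1)
    (he : ∀ i ∈ s, 0 < e i) (hgcd : s.gcd e = 1)
    (hrec : ∀ n ≥ N, f n ≤ ∑ i ∈ s, c i * f (n - e i)) :
    ∃ L, Tendsto f atTop (𝓝 L) := by
  have hs : s.Nonempty := by
    rw [Finset.nonempty_iff_ne_empty]
    rintro rfl
    simp at hgcd
  have hle : ∀ n ≥ N, ∃ j ∈ Finset.Icc 1 (s.sup e), f n ≤ f (n - j) := fun n hn => by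
    obtain ⟨i, hi, hmax⟩ := s.exists_max_image (fun i => f (n - e i)) hs
    exact ⟨e i, Finset.mem_Icc.2 ⟨he i hi, Finset.le_sup hi⟩,
      (hrec n hn).trans (sum_mul_le_of_sum_le_one (fun i hi => (hc i hi).le) hcs hmax (hf _))⟩
  obtain ⟨S, hS, hanchor, hup⟩ := exists_window_limit hf hle
  have hlags : ∀ i ∈ s, e i ∈ propagatingLags f S := fun i hi =>
    mem_propagatingLags hc hcs hS (eventually_atTop.2 ⟨N, hrec⟩) hup hi
  obtain ⟨T, hT⟩ := exists_forall_ge_mem_of_gcd_eq_one hgcd hlags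
  exact ⟨S, tendsto_of_forall_ge_mem_propagatingLags hanchor hup hT⟩

theorem rec_nonneg {k : ℕ} {A : ℝ} {β B : ℕ → ℝ} (hβ : ∀ i, 0 ≤ β i) (hB : ∀ j, 0 ≤ B j)
    (hA : 0 < A) {x : ℤ → ℝ} (hx0 : ∀ n : ℤ, n ≤ 0 → 0 ≤ x n)
    (hrec : ∀ n : ℤ, 1 ≤ n → x n =
      (∑ i ∈ Finset.Icc 1 k, β i * x (n - (i : ℤ))) /
      (A + ∑ j ∈ Finset.Icc 1 k, B j * x (n - (j : ℤ))))
    (n : ℤ) : 0 ≤ x n := by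
  induction n using Int.strongRec (m := 1) with
  | lt n hn => exact hx0 n (by omega)
  | ge n hn ih =>
    have hpast : ∀ i ∈ Finset.Icc 1 k, 0 ≤ x (n - i) := fun i hi =>
      ih _ (by rw [Finset.mem_Icc] at hi; omega)
    rw [hrec n hn]
    exact div_nonneg (Finset.sum_nonneg fun i hi => mul_nonneg (hβ i) (hpast i hi))
      (add_nonneg hA.le (Finset.sum_nonneg fun j hj => mul_nonneg (hB j) (hpast j hj)))

theorem le_sum_filter_div_mul {k : ℕ} {A : ℝ} {β B : ℕ → ℝ} (hβ : ∀ i, 0 ≤ β i)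
    (hB : ∀ j, 0 ≤ B j) (hA : 0 < A) {x : ℤ → ℝ} (hx : ∀ n, 0 ≤ x n)
    (hrec : ∀ n : ℤ, 1 ≤ n → x n =
      (∑ i ∈ Finset.Icc 1 k, β i * x (n - (i : ℤ))) /
      (A + ∑ j ∈ Finset.Icc 1 k, B j * x (n - (j : ℤ))))
    {n : ℤ} (hn : 1 ≤ n) :
    x n ≤ ∑ i ∈ (Finset.Icc 1 k).filter (fun i => 0 < β i), β i / A * x (n - i) := by
  rw [hrec n hn]
  calc _ ≤ (∑ i ∈ Finset.Icc 1 k, β i * x (n - i)) / A :=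
        div_le_div_of_nonneg_left (Finset.sum_nonneg fun i _ => mul_nonneg (hβ i) (hx _)) hA
          (le_add_of_nonneg_right (Finset.sum_nonneg fun j _ => mul_nonneg (hB j) (hx _)))
    _ = ∑ i ∈ Finset.Icc 1 k, β i / A * x (n - i) := by
        rw [Finset.sum_div]
        exact Finset.sum_congr rfl fun i _ => by ring
    _ = _ := (Finset.sum_filter_of_ne fun i _ h => (hβ i).lt_of_ne' fun h0 => h (by simp [h0])).symm

theorem natCast_sub_div_mul_add {g i m : ℕ} (hgi : g ∣ i) (him : i / g ≤ m) (a : ℤ) :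
    ((m - i / g : ℕ) : ℤ) * g + a = m * g + a - i := by
  have hig : ((i / g : ℕ) : ℤ) * g = i := by exact_mod_cast Nat.div_mul_cancel hgi
  rw [Nat.cast_sub him, sub_mul, hig]
  ring

theorem converges_to_periodic_gcd_general (k : ℕ) (A : ℝ) (β B : ℕ → ℝ)
    (hβ : ∀ i, 0 ≤ β i) (hB : ∀ j, 0 ≤ B j) (hA : 0 < A)
    (hsum : 0 < ∑ i ∈ Finset.Icc 1 k, β i)
    (hAβ : ∑ i ∈ Finset.Icc 1 k, β i ≤ A)
    (x : ℤ → ℝ) (hx0 : ∀ n : ℤ, n ≤ 0 → 0 ≤ x n)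
    (hrec : ∀ n : ℤ, 1 ≤ n → x n =
      (∑ i ∈ Finset.Icc 1 k, β i * x (n - (i : ℤ))) /
      (A + ∑ j ∈ Finset.Icc 1 k, B j * x (n - (j : ℤ))))
    (g : ℕ) (hg : g = ((Finset.Icc 1 k).filter (fun i => 0 < β i)).gcd id) :
    ∀ a : ℤ, ∃ L : ℝ,
      Tendsto (fun m : ℕ => x ((m : ℤ) * (g : ℤ) + a)) atTop (𝓝 L) := by
  intro a
  set D := (Finset.Icc 1 k).filter (fun i => 0 < β i)
  have hx := rec_nonneg hβ hB hA hx0 hrec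
  have hsumD : ∑ i ∈ D, β i = ∑ i ∈ Finset.Icc 1 k, β i :=
    Finset.sum_filter_of_ne fun i _ h => (hβ i).lt_of_ne' h
  obtain ⟨i₀, hi₀⟩ : D.Nonempty := Finset.nonempty_of_sum_ne_zero (hsumD ▸ hsum.ne')
  have hD : ∀ i ∈ D, 1 ≤ i ∧ i ≤ k := fun i hi => Finset.mem_Icc.1 (Finset.mem_filter.1 hi).1
  have hdvd : ∀ i ∈ D, g ∣ i := fun i hi => hg ▸ Finset.gcd_dvd hi
  have hg0 : 0 < g := Nat.pos_of_dvd_of_pos (hdvd i₀ hi₀) (hD i₀ hi₀).1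
  refine exists_tendsto_of_le_sum_mul_lag (s := D) (c := fun i => β i / A) (e := fun i => i / g)
    (N := k + (1 - a).toNat) (fun m => hx _) (fun i hi => div_pos (Finset.mem_filter.1 hi).2 hA)
    (by rw [← Finset.sum_div, hsumD, div_le_one hA]; exact hAβ)
    (fun i hi => Nat.div_pos (Nat.le_of_dvd (hD i hi).1 (hdvd i hi)) hg0)
    (hg ▸ Finset.gcd_div_id_eq_one hi₀ (by have := hD i₀ hi₀; omega)) fun m hm => ?_
  have hmg : (m : ℤ) ≤ m * g := le_mul_of_one_le_right (by positivity) (by exact_mod_cast hg0)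
  have hn : 1 ≤ (m : ℤ) * g + a := by have := Int.self_le_toNat (1 - a); omega
  refine (le_sum_filter_div_mul hβ hB hA hx hrec hn).trans_eq (Finset.sum_congr rfl fun i hi => ?_)
  rw [natCast_sub_div_mul_add (hdvd i hi) ((Nat.div_le_self i g).trans (by have := hD i hi; omega))]

/-- Every nonnegative solution of `xₙ = (∑ βᵢ x_{n-i})/(A + ∑ Bⱼ x_{n-j})` with
`A ≥ ∑ βᵢ > 0` converges to a periodic solution of period `g = gcd I_β`:
each subsequence `(x_{mg+a})_m` converges. -/
theorem converges_to_periodic_gcd (k : ℕ) (hk : 1 ≤ k) (A : ℝ) (β B : ℕ → ℝ)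
    (hβ : ∀ i, 0 ≤ β i) (hB : ∀ j, 0 ≤ B j) (hA : 0 < A)
    (hsum : 0 < ∑ i ∈ Finset.Icc 1 k, β i)
    (hAβ : ∑ i ∈ Finset.Icc 1 k, β i ≤ A)
    (x : ℤ → ℝ) (hx0 : ∀ n : ℤ, n ≤ 0 → 0 ≤ x n)
    (hrec : ∀ n : ℤ, 1 ≤ n → x n =
      (∑ i ∈ Finset.Icc 1 k, β i * x (n - (i : ℤ))) /
      (A + ∑ j ∈ Finset.Icc 1 k, B j * x (n - (j : ℤ))))
    (g : ℕ) (hg : g = ((Finset.Icc 1 k).filter (fun i => 0 < β i)).gcd id) :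
    ∀ a : ℤ, ∃ L : ℝ,
      Tendsto (fun m : ℕ => x ((m : ℤ) * (g : ℤ) + a)) atTop (𝓝 L) :=
  converges_to_periodic_gcd_general k A β B hβ hB hA hsum hAβ x hx0 hrec g hg
end

section
/- Consider x_n = (Σ_{i=1}^k β_i x_{n-i}) / (A + Σ_{j=1}^k B_j x_{n-j}) with A > 0 and suppose gcd(I_β) does not divide any j ∈ I_B. If the initial conditions satisfy x_{-m} = 0 for all m with -m ≢ 0 mod gcd(I_β), then x_n = 0 for all n ≢ 0 mod gcd(I_β), and the solution satisfies the linear recursion x_n = (Σ_{i=1}^k β_i x_{n-i}) / A for all n ≥ 1. -/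
/-!
Every term `βᵢ x_{n-i}` with `βᵢ > 0` has `g ∣ i`, so if `g ∤ n` the numerator only sees values
`x_m` with `g ∤ m`; by strong induction these all vanish. Conversely, every term `Bⱼ x_{n-j}` with
`Bⱼ > 0` has `g ∤ j`, so for `g ∣ n` the denominator only sees vanishing values and equals `A`.
For `g ∤ n` both sides of the linear recursion are `0`.
-/

open Finset

theorem Finset.sum_mul_eq_zero_of_nonneg {ι R : Type*} [NonUnitalNonAssocSemiring R]
    [PartialOrder R] {s : Finset ι} {c y : ι → R} (hc : ∀ i, 0 ≤ c i)
    (hy : ∀ i ∈ s, 0 < c i → y i = 0) : ∑ i ∈ s, c i * y i = 0 :=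
  sum_eq_zero fun i hi => (hc i).eq_or_lt.elim
    (fun h => by rw [← h, zero_mul]) (fun h => by rw [hy i hi h, mul_zero])

theorem zero_structured_linearizes_general (k : ℕ) (A : ℝ) (β B : ℕ → ℝ)
    (hβ : ∀ i, 0 ≤ β i) (hB : ∀ j, 0 ≤ B j)
    (g : ℕ) (hg : g = ((Finset.Icc 1 k).filter (fun i => 0 < β i)).gcd id)
    (hnd : ∀ j ∈ (Finset.Icc 1 k).filter (fun j => 0 < B j), ¬ g ∣ j)
    (x : ℤ → ℝ)
    (hxz : ∀ n : ℤ, n ≤ 0 → ¬ ((g : ℤ) ∣ n) → x n = 0)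
    (hrec : ∀ n : ℤ, 1 ≤ n → x n =
      (∑ i ∈ Finset.Icc 1 k, β i * x (n - (i : ℤ))) /
      (A + ∑ j ∈ Finset.Icc 1 k, B j * x (n - (j : ℤ)))) :
    (∀ n : ℤ, 1 ≤ n → ¬ ((g : ℤ) ∣ n) → x n = 0) ∧
      ∀ n : ℤ, 1 ≤ n →
        x n = (∑ i ∈ Finset.Icc 1 k, β i * x (n - (i : ℤ))) / A := by
  have hβg : ∀ i ∈ Icc 1 k, 0 < β i → (g : ℤ) ∣ i := fun i hi hpos =>
    Int.natCast_dvd_natCast.mpr (hg ▸ gcd_dvd (mem_filter.mpr ⟨hi, hpos⟩))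
  have hBg : ∀ j ∈ Icc 1 k, 0 < B j → ¬ (g : ℤ) ∣ j := fun j hj hpos =>
    Int.natCast_dvd_natCast.not.mpr (hnd j (mem_filter.mpr ⟨hj, hpos⟩))
  have hnum : ∀ n : ℤ, ¬ (g : ℤ) ∣ n → (∀ m < n, ¬ (g : ℤ) ∣ m → x m = 0) →
      ∑ i ∈ Icc 1 k, β i * x (n - i) = 0 := fun n hn hx =>
    sum_mul_eq_zero_of_nonneg hβ fun i hi hpos =>
      hx _ (by linarith [(mem_Icc.mp hi).1]) ((dvd_sub_left (hβg i hi hpos)).not.mpr hn)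
  have hzero : ∀ n : ℤ, ¬ (g : ℤ) ∣ n → x n = 0 := by
    intro n
    induction n using Int.strongRec (m := 1) with
    | lt n hn => exact hxz n (by omega)
    | ge n hn ih => exact fun hgn => by rw [hrec n hn, hnum n hgn ih, zero_div]
  refine ⟨fun n _ hn => hzero n hn, fun n hn => ?_⟩
  by_cases hgn : (g : ℤ) ∣ n
  · have hden : ∑ j ∈ Icc 1 k, B j * x (n - j) = 0 :=
      sum_mul_eq_zero_of_nonneg hB fun j hj hpos =>
        hzero _ ((dvd_sub_right hgn).not.mpr (hBg j hj hpos))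
    rw [hrec n hn, hden, add_zero]
  · rw [hzero n hgn, hnum n hgn fun m _ => hzero m, zero_div]

/-- If `gcd I_β` divides no element of `I_B` and the initial conditions vanish at
indices not divisible by `gcd I_β`, then `xₙ = 0` for all `n ≢ 0 mod gcd I_β` and
the solution satisfies the linear recursion `xₙ = (∑ βᵢ x_{n-i})/A`. -/
theorem zero_structured_linearizes (k : ℕ) (hk : 1 ≤ k) (A : ℝ) (β B : ℕ → ℝ)
    (hβ : ∀ i, 0 ≤ β i) (hB : ∀ j, 0 ≤ B j) (hA : 0 < A)
    (hsum : 0 < ∑ i ∈ Finset.Icc 1 k, β i)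
    (g : ℕ) (hg : g = ((Finset.Icc 1 k).filter (fun i => 0 < β i)).gcd id)
    (hnd : ∀ j ∈ (Finset.Icc 1 k).filter (fun j => 0 < B j), ¬ g ∣ j)
    (x : ℤ → ℝ) (hx0 : ∀ n : ℤ, n ≤ 0 → 0 ≤ x n)
    (hxz : ∀ n : ℤ, n ≤ 0 → ¬ ((g : ℤ) ∣ n) → x n = 0)
    (hrec : ∀ n : ℤ, 1 ≤ n → x n =
      (∑ i ∈ Finset.Icc 1 k, β i * x (n - (i : ℤ))) /
      (A + ∑ j ∈ Finset.Icc 1 k, B j * x (n - (j : ℤ)))) :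
    (∀ n : ℤ, 1 ≤ n → ¬ ((g : ℤ) ∣ n) → x n = 0) ∧
      ∀ n : ℤ, 1 ≤ n →
        x n = (∑ i ∈ Finset.Icc 1 k, β i * x (n - (i : ℤ))) / A :=
  zero_structured_linearizes_general k A β B hβ hB g hg hnd x hxz hrec
end

section
/- Under the hypotheses of Lemma on zero-structured initial conditions (gcd(I_β) divides no element of I_B, A > 0), the initial conditions x_{-m} = 1 for -m ≡ 0 mod gcd(I_β) and x_{-m} = 0 otherwise, with A = Σ_{i=1}^k β_i, produce a periodic solution of prime period gcd(I_β) of x_n = (Σ β_i x_{n-i})/(A + Σ B_j x_{n-j}). -/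
/-!
The indicator function of `g ℤ` solves the equation for every `n`: every lag `i` with
`βᵢ > 0` is a multiple of `g`, so the numerator is `A` times the indicator at `n`, and
every lag `j` with `Bⱼ > 0` is not, so at multiples of `g` the `B`-terms vanish and the
quotient is `A / A = 1`. A solution of a recurrence with positive lags is determined by
its values at `n ≤ 0`, so the given solution is this indicator, whose minimal period is `g`.
-/

open Finset

theorem Int.eq_of_recurrence {α : Type*} {k : ℕ} {Φ : (ℕ → α) → α}
    (hΦ : ∀ u v : ℕ → α, (∀ i ∈ Icc 1 k, u i = v i) → Φ u = Φ v)
    {x y : ℤ → α} (hx : ∀ n, 1 ≤ n → x n = Φ fun i => x (n - i))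
    (hy : ∀ n, 1 ≤ n → y n = Φ fun i => y (n - i))
    (h : ∀ n ≤ 0, x n = y n) : x = y := by
  funext n
  induction n using Int.strongRec (m := 1) with
  | lt n hn => exact h n (by omega)
  | ge n hn ih =>
    rw [hx n hn, hy n hn]
    exact hΦ _ _ fun i hi => ih _ (by simp at hi; omega)

noncomputable def dvdIndicator (g : ℕ) (n : ℤ) : ℝ := if (g : ℤ) ∣ n then 1 else 0

theorem dvdIndicator_sub_of_dvd {g i : ℕ} (h : g ∣ i) (n : ℤ) :
    dvdIndicator g (n - i) = dvdIndicator g n := by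
  simp only [dvdIndicator, dvd_sub_left (Int.natCast_dvd_natCast.mpr h)]

theorem dvdIndicator_sub_of_not_dvd {g j : ℕ} (h : ¬ g ∣ j) {n : ℤ} (hn : (g : ℤ) ∣ n) :
    dvdIndicator g (n - j) = 0 := by
  rw [dvdIndicator, if_neg]
  rwa [dvd_sub_right hn, Int.natCast_dvd_natCast]

theorem dvdIndicator_periodic (g : ℕ) : Function.Periodic (dvdIndicator g) g := fun n => by
  simpa using (dvdIndicator_sub_of_dvd (dvd_refl g) (n + g)).symm

theorem dvd_of_dvdIndicator_periodic {g p : ℕ} (h : Function.Periodic (dvdIndicator g) p) :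
    g ∣ p := by
  have h₁ : dvdIndicator g p = 1 := by simpa [dvdIndicator] using h 0
  by_contra hp
  simp [dvdIndicator, Int.natCast_dvd_natCast, hp] at h₁

section Solution

variable {k g : ℕ} {A : ℝ} {β B : ℕ → ℝ}

theorem sum_mul_dvdIndicator_sub (hβ : ∀ i ∈ Icc 1 k, β i ≠ 0 → g ∣ i) (n : ℤ) :
    ∑ i ∈ Icc 1 k, β i * dvdIndicator g (n - i) = (∑ i ∈ Icc 1 k, β i) * dvdIndicator g n := by
  rw [sum_mul]
  refine sum_congr rfl fun i hi => ?_
  by_cases h0 : β i = 0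
  · simp [h0]
  · rw [dvdIndicator_sub_of_dvd (hβ i hi h0)]

theorem sum_mul_dvdIndicator_sub_eq_zero (hB : ∀ j ∈ Icc 1 k, B j ≠ 0 → ¬ g ∣ j) {n : ℤ}
    (hn : (g : ℤ) ∣ n) : ∑ j ∈ Icc 1 k, B j * dvdIndicator g (n - j) = 0 := by
  refine sum_eq_zero fun j hj => ?_
  by_cases h0 : B j = 0
  · simp [h0]
  · rw [dvdIndicator_sub_of_not_dvd (hB j hj h0) hn, mul_zero]

theorem dvdIndicator_eq_div (hA : A ≠ 0) (hAβ : A = ∑ i ∈ Icc 1 k, β i)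
    (hβ : ∀ i ∈ Icc 1 k, β i ≠ 0 → g ∣ i) (hB : ∀ j ∈ Icc 1 k, B j ≠ 0 → ¬ g ∣ j) (n : ℤ) :
    dvdIndicator g n = (∑ i ∈ Icc 1 k, β i * dvdIndicator g (n - i)) /
      (A + ∑ j ∈ Icc 1 k, B j * dvdIndicator g (n - j)) := by
  rw [sum_mul_dvdIndicator_sub hβ, ← hAβ]
  by_cases hn : (g : ℤ) ∣ n
  · rw [sum_mul_dvdIndicator_sub_eq_zero hB hn, dvdIndicator, if_pos hn]
    rw [add_zero, mul_one, div_self hA]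
  · simp [dvdIndicator, hn]

end Solution

theorem prime_period_gcd_general (k : ℕ) (A : ℝ) (β B : ℕ → ℝ)
    (hβ : ∀ i, 0 ≤ β i) (hB : ∀ j, 0 ≤ B j) (hA : 0 < A)
    (hAβ : A = ∑ i ∈ Finset.Icc 1 k, β i)
    (g : ℕ) (hg : g = ((Finset.Icc 1 k).filter (fun i => 0 < β i)).gcd id)
    (hnd : ∀ j ∈ (Finset.Icc 1 k).filter (fun j => 0 < B j), ¬ g ∣ j)
    (x : ℤ → ℝ)
    (hx1 : ∀ n : ℤ, n ≤ 0 → (((g : ℤ) ∣ n → x n = 1) ∧ (¬ (g : ℤ) ∣ n → x n = 0)))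
    (hrec : ∀ n : ℤ, 1 ≤ n → x n =
      (∑ i ∈ Finset.Icc 1 k, β i * x (n - (i : ℤ))) /
      (A + ∑ j ∈ Finset.Icc 1 k, B j * x (n - (j : ℤ)))) :
    (∀ n : ℤ, x (n + (g : ℤ)) = x n) ∧
      ∀ p : ℕ, 0 < p → (∀ n : ℤ, x (n + (p : ℤ)) = x n) → g ≤ p := by
  have hgβ : ∀ i ∈ Icc 1 k, β i ≠ 0 → g ∣ i := fun i hi h0 =>
    hg ▸ gcd_dvd (mem_filter.mpr ⟨hi, (hβ i).lt_of_ne' h0⟩)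
  have hgB : ∀ j ∈ Icc 1 k, B j ≠ 0 → ¬ g ∣ j := fun j hj h0 =>
    hnd j (mem_filter.mpr ⟨hj, (hB j).lt_of_ne' h0⟩)
  have hx : x = dvdIndicator g := by
    refine Int.eq_of_recurrence (k := k)
      (Φ := fun u => (∑ i ∈ Icc 1 k, β i * u i) / (A + ∑ j ∈ Icc 1 k, B j * u j)) ?_ hrec
      (fun n _ => dvdIndicator_eq_div hA.ne' hAβ hgβ hgB n) fun n hn => ?_
    · intro u v huv
      simp only [sum_congr rfl fun i hi => congrArg (β i * ·) (huv i hi),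
        sum_congr rfl fun j hj => congrArg (B j * ·) (huv j hj)]
    · by_cases hgn : (g : ℤ) ∣ n
      · simp [dvdIndicator, hgn, (hx1 n hn).1 hgn]
      · simp [dvdIndicator, hgn, (hx1 n hn).2 hgn]
  subst hx
  exact ⟨dvdIndicator_periodic g,
    fun p hp hper => Nat.le_of_dvd hp (dvd_of_dvdIndicator_periodic hper)⟩

/-- With `A = ∑ βᵢ > 0` and `gcd I_β` dividing no element of `I_B`, the initial
conditions `x_{-m} = 1` for `gcd I_β ∣ m` and `x_{-m} = 0` otherwise yield a
periodic solution of prime period `gcd I_β`. -/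
theorem prime_period_gcd (k : ℕ) (hk : 1 ≤ k) (A : ℝ) (β B : ℕ → ℝ)
    (hβ : ∀ i, 0 ≤ β i) (hB : ∀ j, 0 ≤ B j) (hA : 0 < A)
    (hAβ : A = ∑ i ∈ Finset.Icc 1 k, β i)
    (g : ℕ) (hg : g = ((Finset.Icc 1 k).filter (fun i => 0 < β i)).gcd id)
    (hnd : ∀ j ∈ (Finset.Icc 1 k).filter (fun j => 0 < B j), ¬ g ∣ j)
    (x : ℤ → ℝ)
    (hx1 : ∀ n : ℤ, n ≤ 0 → (((g : ℤ) ∣ n → x n = 1) ∧ (¬ (g : ℤ) ∣ n → x n = 0)))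
    (hrec : ∀ n : ℤ, 1 ≤ n → x n =
      (∑ i ∈ Finset.Icc 1 k, β i * x (n - (i : ℤ))) /
      (A + ∑ j ∈ Finset.Icc 1 k, B j * x (n - (j : ℤ)))) :
    (∀ n : ℤ, x (n + (g : ℤ)) = x n) ∧
      ∀ p : ℕ, 0 < p → (∀ n : ℤ, x (n + (p : ℤ)) = x n) → g ≤ p :=
  prime_period_gcd_general k A β B hβ hB hA hAβ g hg hnd x hx1 hrec
end

section
/- If A < Σ_{i=1}^k β_i and gcd(I_β) divides no element of I_B, then the solution of x_n = (Σ β_i x_{n-i})/(A + Σ B_j x_{n-j}) with initial conditions x_{-m} = 1 for gcd(I_β) | m and x_{-m} = 0 otherwise satisfies the linear recursion x_n = (Σ β_i x_{n-i})/A and is unbounded. -/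
/-!
Only indices divisible by `g` ever carry mass: the numerator lags `i` with `βᵢ > 0` preserve
`gℤ`, while the denominator lags `j` with `Bⱼ > 0` leave it. Hence on `gℤ` the denominator
sees only zeros and reduces to `A`, and off `gℤ` the numerator vanishes, so `x` solves the linear
recursion `xₙ = (∑ βᵢ x_{n-i}) / A`. Along `gℤ` that recursion multiplies by at least
`t = (∑ βᵢ) / A > 1` every `k` steps, so `x (g k N) ≥ t ^ N`.
-/

open Finset

def laggedSum (k : ℕ) (c : ℕ → ℝ) (x : ℤ → ℝ) (n : ℤ) : ℝ :=
  ∑ i ∈ Icc 1 k, c i * x (n - i)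

lemma laggedSum_eq_zero_of_not_dvd {k : ℕ} {c : ℕ → ℝ} {x : ℤ → ℝ} {g n : ℤ}
    (hx : ∀ i ∈ Icc 1 k, x (n - i) ≠ 0 → g ∣ n - i)
    (hc : ∀ i ∈ Icc 1 k, c i ≠ 0 → ¬ g ∣ n - i) : laggedSum k c x n = 0 := by
  refine sum_eq_zero fun i hi => ?_
  by_cases hci : c i = 0
  · rw [hci, zero_mul]
  · rw [not_imp_comm.mp (hx i hi) (hc i hi hci), mul_zero]

section

variable {k : ℕ} {A : ℝ} {β B : ℕ → ℝ} {g : ℤ} {x : ℤ → ℝ}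

lemma dvd_of_ne_zero_of_eq_laggedSum_div {D : ℤ → ℝ} (hβg : ∀ i ∈ Icc 1 k, β i ≠ 0 → g ∣ i)
    (hx0 : ∀ n ≤ 0, x n ≠ 0 → g ∣ n) (hrec : ∀ n ≥ 1, x n = laggedSum k β x n / D n) (n : ℤ) :
    x n ≠ 0 → g ∣ n := by
  induction n using Int.strongRec (m := 1) with
  | lt n hn => exact hx0 n (by omega)
  | ge n hn ih =>
    intro hxn
    by_contra hgn
    have hnum : laggedSum k β x n = 0 :=
      laggedSum_eq_zero_of_not_dvd (fun i hi => ih _ (by have := mem_Icc.mp hi; omega))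
        fun i hi hβi hgi => hgn (by simpa using hgi.add (hβg i hi hβi))
    rw [hrec n hn, hnum, zero_div] at hxn
    exact hxn rfl

lemma eq_laggedSum_div_of_rec (hβg : ∀ i ∈ Icc 1 k, β i ≠ 0 → g ∣ i)
    (hBg : ∀ j ∈ Icc 1 k, B j ≠ 0 → ¬ g ∣ j) (hsupp : ∀ n, x n ≠ 0 → g ∣ n)
    (hrec : ∀ n ≥ 1, x n = laggedSum k β x n / (A + laggedSum k B x n))
    {n : ℤ} (hn : 1 ≤ n) :
    x n = laggedSum k β x n / A := by
  by_cases hgn : g ∣ n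
  · have hden : laggedSum k B x n = 0 :=
      laggedSum_eq_zero_of_not_dvd (fun i _ => hsupp _)
        fun j hj hBj hgj => hBg j hj hBj (by simpa using hgn.sub hgj)
    rw [hrec n hn, hden, add_zero]
  · have hnum : laggedSum k β x n = 0 :=
      laggedSum_eq_zero_of_not_dvd (fun i _ => hsupp _)
        fun i hi hβi hgi => hgn (by simpa using hgi.add (hβg i hi hβi))
    rw [hrec n hn, hnum, zero_div, zero_div]

lemma pow_le_of_linear_rec (hβ : ∀ i, 0 ≤ β i) (hA : 0 < A)
    (ht : 1 ≤ (∑ i ∈ Icc 1 k, β i) / A) (hβg : ∀ i ∈ Icc 1 k, β i ≠ 0 → g ∣ i)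
    (hx0 : ∀ n ≤ 0, g ∣ n → 1 ≤ x n) (hlin : ∀ n ≥ 1, x n = laggedSum k β x n / A)
    (n : ℤ) : g ∣ n → ((∑ i ∈ Icc 1 k, β i) / A) ^ (n.toNat / k) ≤ x n := by
  set t := (∑ i ∈ Icc 1 k, β i) / A
  induction n using Int.strongRec (m := 1) with
  | lt n hn =>
    intro hgn
    simpa [Int.toNat_of_nonpos (show n ≤ 0 by omega)] using hx0 n (by omega) hgn
  | ge n hn ih =>
    intro hgn
    have hterm : ∀ i ∈ Icc 1 k, β i * t ^ (n.toNat / k) ≤ t * (β i * x (n - i)) := by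
      intro i hi
      obtain ⟨hi1, hik⟩ := mem_Icc.mp hi
      by_cases hβi : β i = 0
      · simp [hβi]
      have hexp : n.toNat / k ≤ (n - i).toNat / k + 1 := calc
        n.toNat / k ≤ ((n - i).toNat + k) / k := Nat.div_le_div_right (by omega)
        _ = (n - i).toNat / k + 1 := Nat.add_div_right _ (by omega)
      have hih := ih (n - i) (by omega) (hgn.sub (hβg i hi hβi))
      calc β i * t ^ (n.toNat / k) ≤ β i * t ^ ((n - i).toNat / k + 1) :=
            mul_le_mul_of_nonneg_left (pow_le_pow_right₀ ht hexp) (hβ i)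
        _ ≤ β i * (t * x (n - i)) := by
            rw [pow_succ']
            exact mul_le_mul_of_nonneg_left (mul_le_mul_of_nonneg_left hih (by linarith)) (hβ i)
        _ = t * (β i * x (n - i)) := mul_left_comm _ _ _
    have hsum : t * A * t ^ (n.toNat / k) ≤ t * A * x n := calc
      t * A * t ^ (n.toNat / k) = ∑ i ∈ Icc 1 k, β i * t ^ (n.toNat / k) := by
          rw [div_mul_cancel₀ _ hA.ne', sum_mul]
      _ ≤ ∑ i ∈ Icc 1 k, t * (β i * x (n - i)) := sum_le_sum hterm
      _ = t * A * x n := by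
          rw [← mul_sum, hlin n hn, laggedSum, mul_assoc, mul_div_cancel₀ _ hA.ne']
    exact le_of_mul_le_mul_left hsum (by positivity)

end

lemma not_bddAbove_range_of_pow_le {x : ℤ → ℝ} {t : ℝ} {g k : ℕ} (ht : 1 < t)
    (hg : g ≠ 0) (hk : k ≠ 0) (hx : ∀ n : ℤ, (g : ℤ) ∣ n → t ^ (n.toNat / k) ≤ x n) :
    ¬ BddAbove (Set.range x) := by
  rintro ⟨M, hM⟩
  obtain ⟨N, hN⟩ := pow_unbounded_of_one_lt M ht
  have hexp : ((g * k * N : ℕ) : ℤ).toNat / k = g * N := by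
    rw [Int.toNat_natCast, mul_right_comm, Nat.mul_div_cancel _ (Nat.pos_of_ne_zero hk)]
  have hpow := hx (g * k * N : ℕ) (by push_cast; exact dvd_mul_of_dvd_left (dvd_mul_right _ _) _)
  rw [hexp] at hpow
  have hNg : t ^ N ≤ t ^ (g * N) :=
    pow_le_pow_right₀ ht.le (Nat.le_mul_of_pos_left N (Nat.pos_of_ne_zero hg))
  linarith [hM (Set.mem_range_self ((g * k * N : ℕ) : ℤ))]

theorem unbounded_solution_exists_general (k : ℕ) (A : ℝ) (β B : ℕ → ℝ)
    (hβ : ∀ i, 0 ≤ β i) (hB : ∀ j, 0 ≤ B j) (hA : 0 < A)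
    (hAβ : A < ∑ i ∈ Finset.Icc 1 k, β i)
    (g : ℕ) (hg : g = ((Finset.Icc 1 k).filter (fun i => 0 < β i)).gcd id)
    (hnd : ∀ j ∈ (Finset.Icc 1 k).filter (fun j => 0 < B j), ¬ g ∣ j)
    (x : ℤ → ℝ)
    (hx1 : ∀ n : ℤ, n ≤ 0 → (((g : ℤ) ∣ n → x n = 1) ∧ (¬ (g : ℤ) ∣ n → x n = 0)))
    (hrec : ∀ n : ℤ, 1 ≤ n → x n =
      (∑ i ∈ Finset.Icc 1 k, β i * x (n - (i : ℤ))) /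
      (A + ∑ j ∈ Finset.Icc 1 k, B j * x (n - (j : ℤ)))) :
    (∀ n : ℤ, 1 ≤ n →
        x n = (∑ i ∈ Finset.Icc 1 k, β i * x (n - (i : ℤ))) / A) ∧
      ¬ BddAbove (Set.range x) := by
  have hβg : ∀ i ∈ Icc 1 k, β i ≠ 0 → (g : ℤ) ∣ i := fun i hi hβi =>
    Int.natCast_dvd_natCast.mpr (hg ▸ gcd_dvd (mem_filter.mpr ⟨hi, (hβ i).lt_of_ne' hβi⟩))
  have hBg : ∀ j ∈ Icc 1 k, B j ≠ 0 → ¬ (g : ℤ) ∣ j := fun j hj hBj hgj =>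
    hnd j (mem_filter.mpr ⟨hj, (hB j).lt_of_ne' hBj⟩) (Int.natCast_dvd_natCast.mp hgj)
  have hsupp := dvd_of_ne_zero_of_eq_laggedSum_div hβg
    (fun n hn hxn => not_imp_comm.mp (hx1 n hn).2 hxn) hrec
  have hlin : ∀ n ≥ 1, x n = laggedSum k β x n / A := fun n hn =>
    eq_laggedSum_div_of_rec hβg hBg hsupp hrec hn
  obtain ⟨i, hi, hβi⟩ := exists_ne_zero_of_sum_ne_zero (hA.trans hAβ).ne'
  have ht : 1 < (∑ i ∈ Icc 1 k, β i) / A := (one_lt_div hA).mpr hAβ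
  refine ⟨hlin, not_bddAbove_range_of_pow_le ht ?_ (by have := mem_Icc.mp hi; omega)
    (pow_le_of_linear_rec hβ hA ht.le hβg (fun n hn hgn => ((hx1 n hn).1 hgn).ge) hlin)⟩
  rintro rfl
  have hi0 : (i : ℤ) = 0 := by simpa using hβg i hi hβi
  have := mem_Icc.mp hi
  omega

/-- With `0 < A < ∑ βᵢ` and `gcd I_β` dividing no element of `I_B`, the solution
with initial conditions `x_{-m} = 1` for `gcd I_β ∣ m`, `x_{-m} = 0` otherwise
satisfies the linear recursion `xₙ = (∑ βᵢ x_{n-i})/A` and is unbounded. -/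
theorem unbounded_solution_exists (k : ℕ) (hk : 1 ≤ k) (A : ℝ) (β B : ℕ → ℝ)
    (hβ : ∀ i, 0 ≤ β i) (hB : ∀ j, 0 ≤ B j) (hA : 0 < A)
    (hAβ : A < ∑ i ∈ Finset.Icc 1 k, β i)
    (g : ℕ) (hg : g = ((Finset.Icc 1 k).filter (fun i => 0 < β i)).gcd id)
    (hnd : ∀ j ∈ (Finset.Icc 1 k).filter (fun j => 0 < B j), ¬ g ∣ j)
    (x : ℤ → ℝ)
    (hx1 : ∀ n : ℤ, n ≤ 0 → (((g : ℤ) ∣ n → x n = 1) ∧ (¬ (g : ℤ) ∣ n → x n = 0)))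
    (hrec : ∀ n : ℤ, 1 ≤ n → x n =
      (∑ i ∈ Finset.Icc 1 k, β i * x (n - (i : ℤ))) /
      (A + ∑ j ∈ Finset.Icc 1 k, B j * x (n - (j : ℤ)))) :
    (∀ n : ℤ, 1 ≤ n →
        x n = (∑ i ∈ Finset.Icc 1 k, β i * x (n - (i : ℤ))) / A) ∧
      ¬ BddAbove (Set.range x) :=
  unbounded_solution_exists_general k A β B hβ hB hA hAβ g hg hnd x hx1 hrec
end

section
/- Consider x_n = (α + Σ_{i=1}^k β_i x_{n-i})/(A + Σ_{j=1}^k B_j x_{n-j}) with α > 0, Σ B_j > 0, A = Σ β_i, and let g = gcd(I_β ∪ I_B). Assume 2g | i for all i ∈ I_β and 2g | (j + g) for all j ∈ I_B, and let x̄ be the positive equilibrium. Then the initial conditions x_{-m} = x̄/2 for -m ≡ 0 mod 2g, x_{-m} = 2α/(x̄ Σ_{j∈I_B} B_j) for -m ≡ g mod 2g, and x_{-m} = x̄ otherwise, yield a periodic solution of prime period 2g. -/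
/-!
The solution is the `2g`-periodic profile taking the value `x̄/2` on `0 mod 2g`, `2x̄` on
`g mod 2g` and `x̄` elsewhere. The divisibility hypotheses say that every delay `i` with
`βᵢ > 0` preserves the residue class mod `2g`, while every delay `j` with `Bⱼ > 0` shifts it
by `g`, so the recurrence at `n` reads `(α + A u) / (A + (∑ Bⱼ) v)` with `u`, `v` the profile
at `n` and `n + g`. Since `u v = x̄² = α / ∑ Bⱼ` in each of the three cases, this equals `u`.
By uniqueness of solutions the profile is the solution, and its prime period is `2g` because
`x̄/2` occurs only on `0 mod 2g`.
-/

theorem Finset.sum_mul_eq_of_eq_on_support {ι R : Type*} [NonUnitalNonAssocSemiring R]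
    (s : Finset ι) (w f : ι → R) (c : R)
    (hf : ∀ i ∈ s, w i ≠ 0 → f i = c) :
    ∑ i ∈ s, w i * f i = (∑ i ∈ s, w i) * c := by
  rw [Finset.sum_mul]
  refine Finset.sum_congr rfl fun i hi => ?_
  by_cases hw : w i = 0
  · simp [hw]
  · rw [hf i hi hw]

theorem add_mul_div_add_mul_eq_self {K : Type*} [Field K] {α A S u v : K} (huv : u * v * S = α)
    (hden : A + S * v ≠ 0) : (α + A * u) / (A + S * v) = u := by
  rw [div_eq_iff hden, ← huv]
  ring

theorem Int.eq_of_eq_on_nonpos_of_step {γ : Type*} {x y : ℤ → γ}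
    (h0 : ∀ n ≤ 0, x n = y n)
    (hstep : ∀ n, 1 ≤ n → (∀ m < n, x m = y m) → x n = y n) : x = y := by
  have hbounded : ∀ N : ℕ, ∀ n : ℤ, n ≤ N → x n = y n := by
    intro N
    induction N with
    | zero => exact fun n hn => h0 n (by exact_mod_cast hn)
    | succ N ih =>
      intro n hn
      rcases le_or_gt n N with h | h
      · exact ih n h
      · exact hstep n (by omega) fun m hm => ih m (by omega)
  funext n
  exact hbounded n.toNat n (Int.self_le_toNat n)

theorem Finset.gcd_id_pos_of_mem {s : Finset ℕ} {j : ℕ} (hj : j ∈ s) (hj0 : 0 < j) :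
    0 < s.gcd id :=
  Nat.pos_of_ne_zero fun h => hj0.ne' (Finset.gcd_eq_zero_iff.1 h j hj)

noncomputable def periodicProfile (g : ℕ) (c : ℝ) (n : ℤ) : ℝ :=
  if (2 * g : ℤ) ∣ n then c / 2 else if (2 * g : ℤ) ∣ n - g then 2 * c else c

section periodicProfile

variable {g : ℕ} {c : ℝ}

theorem periodicProfile_congr {m n : ℤ} (h : (2 * g : ℤ) ∣ n - m) :
    periodicProfile g c n = periodicProfile g c m := by
  have h' : (2 * g : ℤ) ∣ (n - g) - (m - g) := by rwa [sub_sub_sub_cancel_right]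
  have hiff : (2 * g : ℤ) ∣ n ↔ (2 * g : ℤ) ∣ m := by rw [← dvd_sub_left h, sub_sub_cancel]
  have hiff' : (2 * g : ℤ) ∣ n - g ↔ (2 * g : ℤ) ∣ m - g := by
    rw [← dvd_sub_left h', sub_sub_cancel]
  simp only [periodicProfile, hiff, hiff']

theorem eq_periodicProfile_of_cases {n : ℤ} {y : ℝ} (hzero : (2 * g : ℤ) ∣ n → y = c / 2)
    (hshift : (2 * g : ℤ) ∣ n - g → y = 2 * c)
    (hrest : ¬ (2 * g : ℤ) ∣ n → ¬ (2 * g : ℤ) ∣ n - g → y = c) :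
    y = periodicProfile g c n := by
  unfold periodicProfile
  split_ifs with h0 h1
  exacts [hzero h0, hshift h1, hrest h0 h1]

theorem periodicProfile_pos (hc : 0 < c) (n : ℤ) : 0 < periodicProfile g c n := by
  unfold periodicProfile
  split_ifs <;> positivity

theorem periodicProfile_mul_periodicProfile_add (hg : 0 < g) (n : ℤ) :
    periodicProfile g c n * periodicProfile g c (n + g) = c * c := by
  have hg2 : ¬ (2 * g : ℤ) ∣ g := fun h => by
    have := Int.le_of_dvd (by exact_mod_cast hg) h
    omega
  unfold periodicProfile
  by_cases h0 : (2 * g : ℤ) ∣ n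
  · have h1 : ¬ (2 * g : ℤ) ∣ n + g := fun h => hg2 (by simpa using (dvd_sub_left h0).2 h)
    simp only [h0, h1, add_sub_cancel_right, if_true, if_false]
    ring
  by_cases hg' : (2 * g : ℤ) ∣ n - g
  · have h1 : (2 * g : ℤ) ∣ n + g := by
      have := dvd_add hg' (dvd_refl (2 * g : ℤ))
      rwa [show n - g + 2 * g = n + g by ring] at this
    simp only [h0, hg', h1, if_true, if_false]
    ring
  · have h1 : ¬ (2 * g : ℤ) ∣ n + g := fun h => hg' <| by
      have := dvd_sub h (dvd_refl (2 * g : ℤ))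
      rwa [show n + g - 2 * g = n - g by ring] at this
    simp only [h0, hg', h1, add_sub_cancel_right, if_false]

theorem dvd_of_periodicProfile_eq_half (hc : 0 < c) {n : ℤ}
    (h : periodicProfile g c n = c / 2) : (2 * g : ℤ) ∣ n := by
  unfold periodicProfile at h
  split_ifs at h with h0
  · exact h0
  all_goals linarith

theorem periodicProfile_eq_recurrence (s : Finset ℕ) (β B : ℕ → ℝ) (α : ℝ) (hg : 0 < g)
    (hc : 0 < c) (hA : 0 ≤ ∑ i ∈ s, β i) (hS : 0 < ∑ j ∈ s, B j)
    (hα : c * c * ∑ j ∈ s, B j = α)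
    (hdivβ : ∀ i ∈ s, β i ≠ 0 → (2 * g : ℤ) ∣ i)
    (hdivB : ∀ j ∈ s, B j ≠ 0 → (2 * g : ℤ) ∣ j + g) (n : ℤ) :
    periodicProfile g c n =
      (α + ∑ i ∈ s, β i * periodicProfile g c (n - i)) /
        (∑ i ∈ s, β i + ∑ j ∈ s, B j * periodicProfile g c (n - j)) := by
  have hsumβ := Finset.sum_mul_eq_of_eq_on_support s β (fun i => periodicProfile g c (n - i))
    (periodicProfile g c n) fun i hi hβi =>
      periodicProfile_congr (by simpa using dvd_neg.2 (hdivβ i hi hβi))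
  have hsumB := Finset.sum_mul_eq_of_eq_on_support s B (fun j => periodicProfile g c (n - j))
    (periodicProfile g c (n + g)) fun j hj hBj =>
      periodicProfile_congr (by
        rw [show n - j - (n + g) = -(j + g : ℤ) by ring]
        exact dvd_neg.2 (hdivB j hj hBj))
  rw [hsumβ, hsumB, add_mul_div_add_mul_eq_self]
  · rw [periodicProfile_mul_periodicProfile_add hg, hα]
  · have := periodicProfile_pos (g := g) hc (n + g)
    positivity

end periodicProfile

theorem prime_period_two_gcd_general (k : ℕ) (α A : ℝ) (β B : ℕ → ℝ)
    (hα : 0 < α) (hβ : ∀ i, 0 ≤ β i) (hB : ∀ j, 0 ≤ B j)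
    (hBsum : 0 < ∑ j ∈ Finset.Icc 1 k, B j)
    (hAβ : A = ∑ i ∈ Finset.Icc 1 k, β i)
    (g : ℕ)
    (hg : g = ((Finset.Icc 1 k).filter (fun i => 0 < β i ∨ 0 < B i)).gcd id)
    (hdivβ : ∀ i ∈ (Finset.Icc 1 k).filter (fun i => 0 < β i), 2 * g ∣ i)
    (hdivB : ∀ j ∈ (Finset.Icc 1 k).filter (fun j => 0 < B j), 2 * g ∣ j + g)
    (xbar : ℝ) (hxbar : xbar = Real.sqrt (α / ∑ j ∈ Finset.Icc 1 k, B j))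
    (x : ℤ → ℝ)
    (hx1 : ∀ n : ℤ, n ≤ 0 →
      (((2 * g : ℤ) ∣ n → x n = xbar / 2) ∧
        ((2 * g : ℤ) ∣ (n - g) → x n = 2 * α / (xbar * ∑ j ∈ Finset.Icc 1 k, B j)) ∧
        (¬ (2 * g : ℤ) ∣ n → ¬ (2 * g : ℤ) ∣ (n - g) → x n = xbar)))
    (hrec : ∀ n : ℤ, 1 ≤ n → x n =
      (α + ∑ i ∈ Finset.Icc 1 k, β i * x (n - (i : ℤ))) /
      (A + ∑ j ∈ Finset.Icc 1 k, B j * x (n - (j : ℤ)))) :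
    (∀ n : ℤ, x (n + (2 * g : ℤ)) = x n) ∧
      ∀ p : ℕ, 0 < p → (∀ n : ℤ, x (n + (p : ℤ)) = x n) → 2 * g ≤ p := by
  set S := ∑ j ∈ Finset.Icc 1 k, B j
  subst hAβ
  have hg0 : 0 < g := by
    obtain ⟨j, hj, hBj⟩ := Finset.exists_ne_zero_of_sum_ne_zero hBsum.ne'
    exact hg ▸ Finset.gcd_id_pos_of_mem
      (Finset.mem_filter.2 ⟨hj, Or.inr ((hB j).lt_of_ne' hBj)⟩) (Finset.mem_Icc.1 hj).1
  have hxbar0 : 0 < xbar := hxbar ▸ Real.sqrt_pos.2 (div_pos hα hBsum)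
  have hxbarS : xbar * xbar * S = α := by
    rw [hxbar, Real.mul_self_sqrt (div_pos hα hBsum).le, div_mul_cancel₀ _ hBsum.ne']
  have hshift : 2 * α / (xbar * S) = 2 * xbar := by
    rw [div_eq_iff (by positivity), ← hxbarS]
    ring
  have hinit : ∀ n ≤ 0, x n = periodicProfile g xbar n := fun n hn =>
    eq_periodicProfile_of_cases (hx1 n hn).1 (fun h => ((hx1 n hn).2.1 h).trans hshift)
      (hx1 n hn).2.2
  have hsol : x = periodicProfile g xbar := by
    refine Int.eq_of_eq_on_nonpos_of_step hinit fun n hn hpast => ?_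
    have hpast' : ∀ i ∈ Finset.Icc 1 k, x (n - i) = periodicProfile g xbar (n - i) :=
      fun i hi => hpast _ (by linarith [(Finset.mem_Icc.1 hi).1])
    rw [hrec n hn, Finset.sum_congr rfl fun i hi => congrArg (β i * ·) (hpast' i hi),
      Finset.sum_congr rfl fun j hj => congrArg (B j * ·) (hpast' j hj)]
    refine (periodicProfile_eq_recurrence _ β B α hg0 hxbar0
      (Finset.sum_nonneg fun i _ => hβ i) hBsum hxbarS (fun i hi hβi => ?_)
      (fun j hj hBj => ?_) n).symm
    · exact_mod_cast hdivβ i (Finset.mem_filter.2 ⟨hi, (hβ i).lt_of_ne' hβi⟩)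
    · exact_mod_cast hdivB j (Finset.mem_filter.2 ⟨hj, (hB j).lt_of_ne' hBj⟩)
  subst hsol
  refine ⟨fun n => periodicProfile_congr (by simp), fun p hp hper => ?_⟩
  have hhalf : periodicProfile g xbar (-p) = xbar / 2 := by
    rw [← hper (-p), neg_add_cancel, periodicProfile, if_pos (dvd_zero _)]
  have hdvd : (2 * g : ℤ) ∣ p := dvd_neg.1 (dvd_of_periodicProfile_eq_half hxbar0 hhalf)
  exact Nat.le_of_dvd hp (by exact_mod_cast hdvd)

/-- With `α > 0`, `∑ Bⱼ > 0`, `A = ∑ βᵢ`, `2g ∣ i` for `i ∈ I_β`, `2g ∣ j + g`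
for `j ∈ I_B` (`g = gcd (I_β ∪ I_B)`), and `x̄ = √(α/∑Bⱼ)` the positive
equilibrium, the initial conditions `x̄/2` at `n ≡ 0 (2g)`,
`2α/(x̄ ∑Bⱼ)` at `n ≡ g (2g)`, and `x̄` otherwise yield a periodic solution of
prime period `2g`. -/
theorem prime_period_two_gcd (k : ℕ) (hk : 1 ≤ k) (α A : ℝ) (β B : ℕ → ℝ)
    (hα : 0 < α) (hβ : ∀ i, 0 ≤ β i) (hB : ∀ j, 0 ≤ B j)
    (hBsum : 0 < ∑ j ∈ Finset.Icc 1 k, B j)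
    (hAβ : A = ∑ i ∈ Finset.Icc 1 k, β i)
    (g : ℕ)
    (hg : g = ((Finset.Icc 1 k).filter (fun i => 0 < β i ∨ 0 < B i)).gcd id)
    (hdivβ : ∀ i ∈ (Finset.Icc 1 k).filter (fun i => 0 < β i), 2 * g ∣ i)
    (hdivB : ∀ j ∈ (Finset.Icc 1 k).filter (fun j => 0 < B j), 2 * g ∣ j + g)
    (xbar : ℝ) (hxbar : xbar = Real.sqrt (α / ∑ j ∈ Finset.Icc 1 k, B j))
    (x : ℤ → ℝ)
    (hx1 : ∀ n : ℤ, n ≤ 0 →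
      (((2 * g : ℤ) ∣ n → x n = xbar / 2) ∧
        ((2 * g : ℤ) ∣ (n - g) → x n = 2 * α / (xbar * ∑ j ∈ Finset.Icc 1 k, B j)) ∧
        (¬ (2 * g : ℤ) ∣ n → ¬ (2 * g : ℤ) ∣ (n - g) → x n = xbar)))
    (hrec : ∀ n : ℤ, 1 ≤ n → x n =
      (α + ∑ i ∈ Finset.Icc 1 k, β i * x (n - (i : ℤ))) /
      (A + ∑ j ∈ Finset.Icc 1 k, B j * x (n - (j : ℤ)))) :
    (∀ n : ℤ, x (n + (2 * g : ℤ)) = x n) ∧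
      ∀ p : ℕ, 0 < p → (∀ n : ℤ, x (n + (p : ℤ)) = x n) → 2 * g ≤ p :=
  prime_period_two_gcd_general k α A β B hα hβ hB hBsum hAβ g hg hdivβ hdivB xbar hxbar x hx1 hrec
end

section
/- Under the hypotheses α > 0, ΣB_j > 0, A = Σβ_i, 2g | i for all i ∈ I_β and 2g | (j+g) for all j ∈ I_B where g = gcd(I_β ∪ I_B), the auxiliary sequence y^a_m = max over ℓ=1..⌊k/(2g)⌋ of x_{2g(m-ℓ)+a}, α/(x_{2g(m-ℓ)+a-g} Σ_{j∈I_B} B_j), and α/(x_{2gm+a-g} Σ_{j∈I_B} B_j) is monotone nonincreasing in m. -/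
/-!
Write `z n = α / (x n * ∑ B)`. Because `A = ∑ β`, every `y > 0` is a fixed point of both
`y ↦ (α + A y) / (A + α / y)` and its dual, so by monotonicity of the recurrence in its lags:
if the `β`-lags of `x` and the `B`-lags of `z` are at most `M`, then `x n ≤ M`; and if the
`β`-lags of `z` and the `B`-lags of `x` are at most `M`, then `z n ≤ M`. The divisibility
hypotheses place the `β`-lags of a position `p` at `p - 2gℓ` and its `B`-lags at `p - 2gℓ - g`,
exactly the positions recorded in the window of `y^a_m` (with `p = 2gm + a`). Hence an upper bound
of the window at `p` bounds `x p` and `z (p + g)`, and therefore the window at `p + 2g`.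
-/

section WeightedSums

variable {ι : Type*} {s : Finset ι} {w f : ι → ℝ} {c : ℝ}

lemma sum_mul_le_sum_mul_const (hw : ∀ i ∈ s, 0 ≤ w i) (hf : ∀ i ∈ s, 0 < w i → f i ≤ c) :
    ∑ i ∈ s, w i * f i ≤ (∑ i ∈ s, w i) * c := by
  rw [Finset.sum_mul]
  refine Finset.sum_le_sum fun i hi => ?_
  rcases (hw i hi).eq_or_lt with h | h
  · simp [← h]
  · exact mul_le_mul_of_nonneg_left (hf i hi h) h.le

lemma sum_mul_const_le_sum_mul (hw : ∀ i ∈ s, 0 ≤ w i) (hf : ∀ i ∈ s, 0 < w i → c ≤ f i) :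
    (∑ i ∈ s, w i) * c ≤ ∑ i ∈ s, w i * f i := by
  rw [Finset.sum_mul]
  refine Finset.sum_le_sum fun i hi => ?_
  rcases (hw i hi).eq_or_lt with h | h
  · simp [← h]
  · exact mul_le_mul_of_nonneg_left (hf i hi h) h.le

lemma sum_mul_pos_of_sum_pos (hw : ∀ i ∈ s, 0 ≤ w i) (hs : 0 < ∑ i ∈ s, w i)
    (hf : ∀ i ∈ s, 0 < f i) : 0 < ∑ i ∈ s, w i * f i := by
  obtain ⟨i, hi, hwi⟩ := (Finset.sum_pos_iff_of_nonneg hw).1 hs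
  exact (Finset.sum_pos_iff_of_nonneg fun j hj => mul_nonneg (hw j hj) (hf j hj).le).2
    ⟨i, hi, mul_pos hwi (hf i hi)⟩

end WeightedSums

lemma div_mul_le_comm {α y M S : ℝ} (hy : 0 < y) (hM : 0 < M) :
    α / (y * S) ≤ M ↔ α / (M * S) ≤ y := by
  rw [mul_comm y, mul_comm M, ← div_div, ← div_div]
  exact div_le_comm₀ hy hM

section Recurrence

variable {ι : Type*} {s : Finset ι} {α M : ℝ} {β B f : ι → ℝ}

lemma recurrence_step_le (hM : 0 < M) (hβ : ∀ i ∈ s, 0 ≤ β i) (hB : ∀ i ∈ s, 0 ≤ B i)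
    (hS : 0 < ∑ i ∈ s, B i) (hf : ∀ i ∈ s, 0 < f i) (hβf : ∀ i ∈ s, 0 < β i → f i ≤ M)
    (hBf : ∀ i ∈ s, 0 < B i → α / (f i * ∑ j ∈ s, B j) ≤ M) :
    (α + ∑ i ∈ s, β i * f i) / (∑ i ∈ s, β i + ∑ i ∈ s, B i * f i) ≤ M := by
  have hnum := sum_mul_le_sum_mul_const hβ hβf
  have hden : α ≤ M * ∑ i ∈ s, B i * f i := by
    have h := sum_mul_const_le_sum_mul hB fun i hi h =>
      (div_mul_le_comm (hf i hi) hM).1 (hBf i hi h)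
    calc α = M * ((∑ i ∈ s, B i) * (α / (M * ∑ i ∈ s, B i))) := by field_simp
      _ ≤ M * ∑ i ∈ s, B i * f i := mul_le_mul_of_nonneg_left h hM.le
  have hpos : 0 < ∑ i ∈ s, B i * f i := sum_mul_pos_of_sum_pos hB hS hf
  rw [div_le_iff₀ (by linarith [Finset.sum_nonneg hβ]), mul_add]
  linarith

lemma dual_recurrence_step_le (hα : 0 < α) (hM : 0 < M) (hβ : ∀ i ∈ s, 0 ≤ β i)
    (hB : ∀ i ∈ s, 0 ≤ B i) (hS : 0 < ∑ i ∈ s, B i) (hf : ∀ i ∈ s, 0 < f i)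
    (hβf : ∀ i ∈ s, 0 < β i → α / (f i * ∑ j ∈ s, B j) ≤ M) (hBf : ∀ i ∈ s, 0 < B i → f i ≤ M) :
    α / ((α + ∑ i ∈ s, β i * f i) / (∑ i ∈ s, β i + ∑ i ∈ s, B i * f i) * ∑ i ∈ s, B i) ≤ M := by
  have hβ0 := Finset.sum_nonneg hβ
  have hβf0 : 0 ≤ ∑ i ∈ s, β i * f i :=
    Finset.sum_nonneg fun i hi => mul_nonneg (hβ i hi) (hf i hi).le
  have hden : 0 < ∑ i ∈ s, β i + ∑ i ∈ s, B i * f i := by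
    linarith [sum_mul_pos_of_sum_pos hB hS hf]
  rw [div_mul_le_comm (by positivity) hM, le_div_iff₀ hden]
  set q := α / (M * ∑ i ∈ s, B i)
  have hnum := sum_mul_const_le_sum_mul hβ fun i hi h =>
    (div_mul_le_comm (hf i hi) hM).1 (hβf i hi h)
  have hBs := sum_mul_le_sum_mul_const hB hBf
  have hq : q * ((∑ i ∈ s, B i) * M) = α := by simp only [q]; field_simp
  have hq0 : 0 ≤ q := by positivity
  have hqB := mul_le_mul_of_nonneg_left hBs hq0
  rw [mul_add]
  linarith

end Recurrence

lemma exists_eq_two_mul_mul_of_dvd {g k i : ℕ} (hi : i ∈ Finset.Icc 1 k) (h : 2 * g ∣ i) :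
    ∃ ℓ ∈ Set.Icc 1 (k / (2 * g)), i = 2 * g * ℓ := by
  obtain ⟨ℓ, rfl⟩ := h
  rw [Finset.mem_Icc] at hi
  have hg : 0 < 2 * g := Nat.pos_of_mul_pos_right hi.1
  refine ⟨ℓ, ⟨Nat.pos_of_mul_pos_left hi.1, ?_⟩, rfl⟩
  exact (Nat.le_div_iff_mul_le hg).2 (by rw [mul_comm]; exact hi.2)

lemma exists_eq_two_mul_mul_add_of_dvd {g k j : ℕ} (hj : j ∈ Finset.Icc 1 k)
    (h : 2 * g ∣ j + g) : ∃ ℓ ≤ k / (2 * g), j = 2 * g * ℓ + g := by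
  rw [Finset.mem_Icc] at hj
  obtain ⟨_ | ℓ, hℓ⟩ := h
  · omega
  rw [mul_add, mul_one] at hℓ
  have hg : 0 < 2 * g := Nat.pos_of_ne_zero fun h0 => by simp [h0] at hℓ; omega
  exact ⟨ℓ, (Nat.le_div_iff_mul_le hg).2 (by rw [mul_comm]; omega), by omega⟩

/-- The set whose supremum is `y^a_m`, for `p = 2gm + a`. -/
def window (x : ℤ → ℝ) (α S : ℝ) (g ρ : ℕ) (p : ℤ) : Set ℝ :=
  (fun ℓ : ℕ => x (p - 2 * g * ℓ)) '' Set.Icc 1 ρ ∪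
    (fun ℓ : ℕ => α / (x (p - 2 * g * ℓ - g) * S)) '' Set.Icc 1 ρ ∪ {α / (x (p - g) * S)}

section Window

variable {x : ℤ → ℝ} {α S : ℝ} {g ρ : ℕ} {p : ℤ}

lemma window_finite : (window x α S g ρ p).Finite :=
  (((Set.finite_Icc 1 ρ).image _).union ((Set.finite_Icc 1 ρ).image _)).union
    (Set.finite_singleton _)

lemma window_nonempty : (window x α S g ρ p).Nonempty := ⟨_, Or.inr rfl⟩

lemma mem_upperBounds_window {M : ℝ} :
    M ∈ upperBounds (window x α S g ρ p) ↔
      (∀ ℓ ∈ Set.Icc 1 ρ, x (p - 2 * g * ℓ) ≤ M) ∧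
        ∀ ℓ ≤ ρ, α / (x (p - 2 * g * ℓ - g) * S) ≤ M := by
  simp only [window, mem_upperBounds, Set.mem_union, Set.mem_singleton_iff, or_imp, forall_and,
    Set.forall_mem_image, forall_eq]
  rw [and_assoc]
  refine and_congr_right fun _ => ⟨fun ⟨h, h0⟩ ℓ hℓ => ?_, fun h => ⟨fun ℓ hℓ => h ℓ hℓ.2, ?_⟩⟩
  · rcases ℓ with _ | ℓ
    · simpa using h0
    · exact h ⟨ℓ.succ_pos, hℓ⟩
  · simpa using h 0 ρ.zero_le

end Window

lemma upperBounds_window_add {k g : ℕ} {α M : ℝ} {β B : ℕ → ℝ} {x : ℤ → ℝ} {p : ℤ}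
    (hα : 0 < α) (hβ : ∀ i, 0 ≤ β i) (hB : ∀ j, 0 ≤ B j)
    (hS : 0 < ∑ j ∈ Finset.Icc 1 k, B j)
    (hdivβ : ∀ i ∈ Finset.Icc 1 k, 0 < β i → 2 * g ∣ i)
    (hdivB : ∀ j ∈ Finset.Icc 1 k, 0 < B j → 2 * g ∣ j + g) (hpos : ∀ n, 0 < x n)
    (hrec : ∀ n : ℤ, 1 ≤ n → x n = (α + ∑ i ∈ Finset.Icc 1 k, β i * x (n - i)) /
      (∑ i ∈ Finset.Icc 1 k, β i + ∑ j ∈ Finset.Icc 1 k, B j * x (n - j)))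
    (hp : 1 ≤ p)
    (hM : M ∈ upperBounds (window x α (∑ j ∈ Finset.Icc 1 k, B j) g (k / (2 * g)) p)) :
    M ∈ upperBounds (window x α (∑ j ∈ Finset.Icc 1 k, B j) g (k / (2 * g)) (p + 2 * g)) := by
  rw [mem_upperBounds_window] at hM ⊢
  obtain ⟨hx, hz⟩ := hM
  have hM0 : 0 < M := (div_pos hα (mul_pos (hpos _) hS)).trans_le (hz 0 (Nat.zero_le _))
  have hxp : x p ≤ M := by
    rw [hrec p hp]
    refine recurrence_step_le hM0 (fun i _ => hβ i) (fun j _ => hB j) hS (fun i _ => hpos _) ?_ ?_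
    · intro i hi hβi
      obtain ⟨ℓ, hℓ, rfl⟩ := exists_eq_two_mul_mul_of_dvd hi (hdivβ i hi hβi)
      convert hx ℓ hℓ using 2
      push_cast; ring
    · intro j hj hBj
      obtain ⟨ℓ, hℓ, rfl⟩ := exists_eq_two_mul_mul_add_of_dvd hj (hdivB j hj hBj)
      convert hz ℓ hℓ using 4
      push_cast; ring
  have hx₀ : ∀ ℓ ≤ k / (2 * g), x (p - 2 * g * ℓ) ≤ M := by
    rintro (_ | ℓ) hℓ
    · simpa using hxp
    · exact hx _ ⟨ℓ.succ_pos, hℓ⟩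
  have hzp : α / (x (p + g) * ∑ j ∈ Finset.Icc 1 k, B j) ≤ M := by
    rw [hrec (p + g) (by omega)]
    refine dual_recurrence_step_le hα hM0 (fun i _ => hβ i) (fun j _ => hB j) hS (fun i _ => hpos _)
      ?_ ?_
    · intro i hi hβi
      obtain ⟨_ | ℓ, hℓ, rfl⟩ := exists_eq_two_mul_mul_of_dvd hi (hdivβ i hi hβi)
      · exact absurd hℓ.1 (by simp)
      convert hz ℓ (by have := hℓ.2; omega) using 4
      push_cast; ring
    · intro j hj hBj
      obtain ⟨ℓ, hℓ, rfl⟩ := exists_eq_two_mul_mul_add_of_dvd hj (hdivB j hj hBj)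
      convert hx₀ ℓ hℓ using 2
      push_cast; ring
  refine ⟨fun ℓ hℓ => ?_, fun ℓ hℓ => ?_⟩
  · obtain ⟨ℓ, rfl⟩ := Nat.exists_eq_add_of_le' hℓ.1
    convert hx₀ ℓ (by have := hℓ.2; omega) using 2
    push_cast; ring
  · rcases ℓ with _ | ℓ
    · convert hzp using 4
      push_cast; ring
    · convert hz ℓ (by omega) using 4
      push_cast; ring

theorem aux_sequence_monotone_two_gcd_general (k : ℕ) (α A : ℝ) (β B : ℕ → ℝ)
    (hα : 0 < α) (hβ : ∀ i, 0 ≤ β i) (hB : ∀ j, 0 ≤ B j)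
    (hBsum : 0 < ∑ j ∈ Finset.Icc 1 k, B j)
    (hAβ : A = ∑ i ∈ Finset.Icc 1 k, β i)
    (g : ℕ)
    (hdivβ : ∀ i ∈ (Finset.Icc 1 k).filter (fun i => 0 < β i), 2 * g ∣ i)
    (hdivB : ∀ j ∈ (Finset.Icc 1 k).filter (fun j => 0 < B j), 2 * g ∣ j + g)
    (x : ℤ → ℝ) (hpos : ∀ n : ℤ, 0 < x n)
    (hrec : ∀ n : ℤ, 1 ≤ n → x n =
      (α + ∑ i ∈ Finset.Icc 1 k, β i * x (n - (i : ℤ))) /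
      (A + ∑ j ∈ Finset.Icc 1 k, B j * x (n - (j : ℤ))))
    (ρ : ℕ) (hρ : ρ = k / (2 * g))
    (Y : ℤ → ℕ → ℝ)
    (hY : ∀ a : ℤ, ∀ m : ℕ, Y a m = sSup
      (((fun ℓ : ℕ => x (2 * (g : ℤ) * ((m : ℤ) - (ℓ : ℤ)) + a)) '' Set.Icc 1 ρ) ∪
        ((fun ℓ : ℕ => α / (x (2 * (g : ℤ) * ((m : ℤ) - (ℓ : ℤ)) + a - (g : ℤ)) *
          ∑ j ∈ Finset.Icc 1 k, B j)) '' Set.Icc 1 ρ) ∪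
        {α / (x (2 * (g : ℤ) * (m : ℤ) + a - (g : ℤ)) * ∑ j ∈ Finset.Icc 1 k, B j)})) :
    ∀ a : ℤ, 1 ≤ a → ∀ m : ℕ, Y a (m + 1) ≤ Y a m := by
  subst hAβ hρ
  intro a ha m
  have hY_window : ∀ m : ℕ,
      Y a m = sSup (window x α (∑ j ∈ Finset.Icc 1 k, B j) g (k / (2 * g)) (2 * g * m + a)) := by
    intro m
    have hidx : ∀ ℓ : ℕ, 2 * (g : ℤ) * ((m : ℤ) - ℓ) + a = 2 * g * m + a - 2 * g * ℓ :=
      fun ℓ => by ring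
    simp only [hY, hidx, window]
  rw [hY_window, hY_window, show 2 * g * ((m + 1 : ℕ) : ℤ) + a = 2 * g * m + a + 2 * g by
    push_cast; ring]
  have hp : 1 ≤ 2 * (g : ℤ) * m + a := le_add_of_nonneg_of_le (by positivity) ha
  refine csSup_le window_nonempty (upperBounds_window_add hα hβ hB hBsum
    (fun i hi h => hdivβ i (Finset.mem_filter.2 ⟨hi, h⟩))
    (fun j hj h => hdivB j (Finset.mem_filter.2 ⟨hj, h⟩)) hpos hrec hp ?_)
  exact (isLUB_csSup window_nonempty window_finite.bddAbove).1

/-- Under `α > 0`, `∑ Bⱼ > 0`, `A = ∑ βᵢ`, `2g ∣ i` for `i ∈ I_β`, and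
`2g ∣ j + g` for `j ∈ I_B` (`g = gcd (I_β ∪ I_B)`), the auxiliary sequence
`y^a_m = max_{ℓ=1..ρ} ( x_{2g(m-ℓ)+a}, α/(x_{2g(m-ℓ)+a-g} ∑Bⱼ), α/(x_{2gm+a-g} ∑Bⱼ) )`
is nonincreasing in `m`. -/
theorem aux_sequence_monotone_two_gcd (k : ℕ) (hk : 1 ≤ k) (α A : ℝ) (β B : ℕ → ℝ)
    (hα : 0 < α) (hβ : ∀ i, 0 ≤ β i) (hB : ∀ j, 0 ≤ B j)
    (hBsum : 0 < ∑ j ∈ Finset.Icc 1 k, B j)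
    (hAβ : A = ∑ i ∈ Finset.Icc 1 k, β i)
    (g : ℕ)
    (hg : g = ((Finset.Icc 1 k).filter (fun i => 0 < β i ∨ 0 < B i)).gcd id)
    (hdivβ : ∀ i ∈ (Finset.Icc 1 k).filter (fun i => 0 < β i), 2 * g ∣ i)
    (hdivB : ∀ j ∈ (Finset.Icc 1 k).filter (fun j => 0 < B j), 2 * g ∣ j + g)
    (x : ℤ → ℝ) (hpos : ∀ n : ℤ, 0 < x n)
    (hrec : ∀ n : ℤ, 1 ≤ n → x n =
      (α + ∑ i ∈ Finset.Icc 1 k, β i * x (n - (i : ℤ))) /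
      (A + ∑ j ∈ Finset.Icc 1 k, B j * x (n - (j : ℤ))))
    (ρ : ℕ) (hρ : ρ = k / (2 * g))
    (Y : ℤ → ℕ → ℝ)
    (hY : ∀ a : ℤ, ∀ m : ℕ, Y a m = sSup
      (((fun ℓ : ℕ => x (2 * (g : ℤ) * ((m : ℤ) - (ℓ : ℤ)) + a)) '' Set.Icc 1 ρ) ∪
        ((fun ℓ : ℕ => α / (x (2 * (g : ℤ) * ((m : ℤ) - (ℓ : ℤ)) + a - (g : ℤ)) *
          ∑ j ∈ Finset.Icc 1 k, B j)) '' Set.Icc 1 ρ) ∪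
        {α / (x (2 * (g : ℤ) * (m : ℤ) + a - (g : ℤ)) * ∑ j ∈ Finset.Icc 1 k, B j)})) :
    ∀ a : ℤ, 1 ≤ a → ∀ m : ℕ, Y a (m + 1) ≤ Y a m :=
  aux_sequence_monotone_two_gcd_general k α A β B hα hβ hB hBsum hAβ g hdivβ hdivB x hpos hrec ρ hρ
    Y hY
end

section
/- Every positive solution of x_n = (Σ_{i=1}^k β_{2i} x_{n-2i} + x_{n-ℓ})/(A + x_{n-ℓ}) with 0 < Σβ_{2i} < A and A ≥ 1 + Σβ_{2i} converges to 0: the solution is bounded, its limsup S satisfies S ≤ max((Σβ_{2i}/A)S, 1), hence S ≤ 1, and then S² ≤ (Σβ_{2i} + 1 − A)S together with I² ≥ (Σβ_{2i} + 1 − A)I forces S = I = 0. -/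
/-!
If every term of the window `x_{n-2k}, …, x_{n-1}` is at most `M`, the mediant-type bound
`(c + t)/(A + t) ≤ max (c/A) ((c + M)/(A + M))` for `0 < t ≤ M` gives
`x_n ≤ φ M := max (B M / A) ((B M + M)/(A + M))` with `B = ∑ β_{2i}`. A window bound therefore
persists forever and, one window later, improves to `φ M`. Since `B + 1 ≤ A`, the continuous
map `φ` satisfies `0 < φ M < M` for `M > 0`, so its iterates decrease to a fixed point, which
must be `0`.
-/

open Filter Topology

theorem add_div_add_le_max {A b c t M : ℝ} (hA : 0 < A) (hc : c ≤ b) (ht : 0 < t) (htM : t ≤ M) :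
    (c + t) / (A + t) ≤ max (b / A) ((b + M) / (A + M)) := by
  calc (c + t) / (A + t) ≤ (b + t) / (A + t) :=
        div_le_div_of_nonneg_right (by linarith) (by linarith)
    _ ≤ max (b / A) ((b + M) / (A + M)) := by
      rcases le_total b A with hbA | hAb
      · refine le_max_of_le_right ?_
        rw [div_le_div_iff₀ (by linarith) (by linarith)]
        nlinarith [mul_nonneg (sub_nonneg.2 htM) (sub_nonneg.2 hbA)]
      · refine le_max_of_le_left ?_
        rw [div_le_div_iff₀ (by linarith) hA]
        nlinarith [mul_le_mul_of_nonneg_left hAb ht.le]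

theorem tendsto_iterate_zero_of_lt {φ : ℝ → ℝ} (hcont : ∀ M, 0 ≤ M → ContinuousAt φ M)
    (hpos : Set.MapsTo φ (Set.Ioi 0) (Set.Ioi 0)) (hlt : ∀ M, 0 < M → φ M < M) {M₀ : ℝ}
    (hM₀ : 0 < M₀) :
    Tendsto (fun j => φ^[j] M₀) atTop (𝓝 0) := by
  have hv_pos : ∀ j, 0 < φ^[j] M₀ := fun j => hpos.iterate j hM₀
  have hanti : Antitone fun j => φ^[j] M₀ := antitone_nat_of_succ_le fun j => by
    rw [Function.iterate_succ_apply']; exact (hlt _ (hv_pos j)).le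
  have hL := tendsto_atTop_ciInf hanti ⟨0, by rintro _ ⟨j, rfl⟩; exact (hv_pos j).le⟩
  have hL0 : 0 ≤ ⨅ j, φ^[j] M₀ := ge_of_tendsto' hL fun j => (hv_pos j).le
  have hfix := isFixedPt_of_tendsto_iterate hL (hcont _ hL0)
  rcases hL0.eq_or_lt with hzero | hLpos
  · rwa [← hzero] at hL
  · exact absurd hfix (hlt _ hLpos).ne

section WindowStep

variable {x : ℤ → ℝ} {p : ℕ} {φ : ℝ → ℝ}
  (hstep : ∀ n : ℤ, 1 ≤ n → ∀ M : ℝ, 0 < M → (∀ j ∈ Set.Ico (n - p) n, x j ≤ M) → x n ≤ φ M)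
include hstep

theorem le_of_le_on_window {n : ℤ} {M : ℝ} (hn : 1 ≤ n) (hM : 0 < M) (hφM : φ M ≤ M)
    (hwin : ∀ j ∈ Set.Ico (n - p) n, x j ≤ M) (m : ℤ) (hm : n - p ≤ m) : x m ≤ M := by
  have hprop : ∀ m, n ≤ m → ∀ j ∈ Set.Ico (n - p) m, x j ≤ M := by
    intro m hm
    induction m, hm using Int.leInduction with
    | base => exact hwin
    | succ m hnm ih =>
      intro j ⟨hj₁, hj₂⟩
      rcases (Int.lt_add_one_iff.1 hj₂).lt_or_eq with hjm | rfl
      · exact ih j ⟨hj₁, hjm⟩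
      · exact (hstep j (by omega) M hM fun i ⟨hi₁, hi₂⟩ => ih i ⟨by omega, hi₂⟩).trans hφM
  exact hprop (max n (m + 1)) (le_max_left _ _) m ⟨hm, by omega⟩

theorem le_apply_of_le_on_Ici {n : ℤ} {M : ℝ} (hn : 1 ≤ n) (hM : 0 < M)
    (hbound : ∀ m, n - p ≤ m → x m ≤ M) (m : ℤ) (hm : n ≤ m) : x m ≤ φ M :=
  hstep m (by omega) M hM fun j ⟨hj, _⟩ => hbound j (by omega)

theorem le_iterate_of_le_on_window (hpos : Set.MapsTo φ (Set.Ioi 0) (Set.Ioi 0))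
    (hlt : ∀ M, 0 < M → φ M < M) {M₀ : ℝ} (hM₀ : 0 < M₀)
    (hinit : ∀ j ∈ Set.Ico (1 - p : ℤ) 1, x j ≤ M₀) (j : ℕ) (m : ℤ) (hm : p * j + 1 - p ≤ m) :
    x m ≤ φ^[j] M₀ := by
  induction j generalizing m with
  | zero =>
    exact le_of_le_on_window hstep le_rfl hM₀ (hlt M₀ hM₀).le hinit m (by simpa using hm)
  | succ j ih =>
    rw [Function.iterate_succ_apply']
    exact le_apply_of_le_on_Ici hstep (n := p * j + 1) (le_add_of_nonneg_left (by positivity))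
      (hpos.iterate j hM₀) ih m (by push_cast at hm; linarith)

theorem tendsto_zero_of_window_step (hcont : ∀ M, 0 ≤ M → ContinuousAt φ M)
    (hpos : Set.MapsTo φ (Set.Ioi 0) (Set.Ioi 0)) (hlt : ∀ M, 0 < M → φ M < M)
    (hx : ∀ n : ℕ, 0 ≤ x n) :
    Tendsto (fun n : ℕ => x n) atTop (𝓝 0) := by
  obtain ⟨M, hM⟩ := ((Set.finite_Ico (1 - p : ℤ) 1).image x).bddAbove
  have hbound := le_iterate_of_le_on_window hstep hpos hlt (M₀ := max M 1) (by positivity)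
    fun j hj => (hM ⟨j, hj, rfl⟩).trans (le_max_left _ _)
  have hiter := tendsto_iterate_zero_of_lt hcont hpos hlt (M₀ := max M 1) (by positivity)
  refine tendsto_order.2 ⟨fun a ha => Eventually.of_forall fun n => ha.trans_le (hx n),
    fun ε hε => ?_⟩
  obtain ⟨j, hj⟩ := (hiter.eventually (gt_mem_nhds hε)).exists
  filter_upwards [eventually_ge_atTop (p * j + 1)] with n hn
  exact (hbound j n (by omega)).trans_lt hj

end WindowStep

noncomputable def recBound (A B M : ℝ) : ℝ := max (B * M / A) ((B * M + M) / (A + M))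

section RecBound

variable {A B M : ℝ}

theorem continuousAt_recBound (hA : 0 < A) (hM : 0 ≤ M) : ContinuousAt (recBound A B) M := by
  unfold recBound
  exact ((continuousAt_const.mul continuousAt_id).div_const A).max
    (((continuousAt_const.mul continuousAt_id).add continuousAt_id).div
      (continuousAt_const.add continuousAt_id) (by linarith))

theorem recBound_pos (hA : 0 < A) (hB : 0 ≤ B) (hM : 0 < M) : 0 < recBound A B M :=
  lt_max_of_lt_right (div_pos (by positivity) (by linarith))

theorem recBound_lt (hB : 0 ≤ B) (hBA : 1 + B ≤ A) (hM : 0 < M) : recBound A B M < M := by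
  refine max_lt ?_ ?_
  · rw [div_lt_iff₀ (by linarith)]; nlinarith
  · rw [div_lt_iff₀ (by linarith)]; nlinarith

end RecBound

def SolvesRecurrence (k ℓ : ℕ) (A : ℝ) (β : ℕ → ℝ) (x : ℤ → ℝ) : Prop :=
  ∀ n : ℤ, 1 ≤ n → x n =
    ((∑ i ∈ Finset.Icc 1 k, β i * x (n - 2 * (i : ℤ))) + x (n - (ℓ : ℤ))) / (A + x (n - (ℓ : ℤ)))

section Recurrence

variable {k ℓ : ℕ} {A : ℝ} {β : ℕ → ℝ} {x : ℤ → ℝ}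

theorem SolvesRecurrence.pos (hrec : SolvesRecurrence k ℓ A β x) (hβ : ∀ i, 0 ≤ β i)
    (hA : 0 ≤ A) (hℓ : 1 ≤ ℓ) (hx0 : ∀ n : ℤ, n ≤ 0 → 0 < x n) (n : ℤ) : 0 < x n := by
  have hprop : ∀ m : ℤ, 1 ≤ m → ∀ j < m, 0 < x j := by
    intro m hm
    induction m, hm using Int.leInduction with
    | base => exact fun j hj => hx0 j (by omega)
    | succ m hm ih =>
      intro j hj
      rcases (Int.lt_add_one_iff.1 hj).lt_or_eq with hjm | rfl
      · exact ih j hjm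
      · have ht : 0 < x (j - ℓ) := ih _ (by omega)
        have hc : 0 ≤ ∑ i ∈ Finset.Icc 1 k, β i * x (j - 2 * (i : ℤ)) :=
          Finset.sum_nonneg fun i hi =>
            mul_nonneg (hβ i) (ih _ (by simp only [Finset.mem_Icc] at hi; omega)).le
        rw [hrec j hm]
        exact div_pos (by linarith) (by linarith)
  exact hprop (max 1 (n + 1)) (le_max_left _ _) n (by omega)

theorem SolvesRecurrence.le_recBound (hrec : SolvesRecurrence k ℓ A β x) (hβ : ∀ i, 0 ≤ β i)
    (hA : 0 < A) (hℓ1 : 1 ≤ ℓ) (hℓ2 : ℓ ≤ 2 * k) (hpos : ∀ n, 0 < x n) {n : ℤ} (hn : 1 ≤ n)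
    {M : ℝ} (hwin : ∀ j ∈ Set.Ico (n - (2 * k : ℕ)) n, x j ≤ M) :
    x n ≤ recBound A (∑ i ∈ Finset.Icc 1 k, β i) M := by
  rw [hrec n hn]
  refine add_div_add_le_max hA ?_ (hpos _) (hwin _ ⟨by push_cast; omega, by omega⟩)
  calc ∑ i ∈ Finset.Icc 1 k, β i * x (n - 2 * (i : ℤ))
      ≤ ∑ i ∈ Finset.Icc 1 k, β i * M :=
        Finset.sum_le_sum fun i hi => mul_le_mul_of_nonneg_left
          (hwin _ (by simp only [Finset.mem_Icc] at hi; constructor <;> push_cast <;> omega)) (hβ i)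
    _ = (∑ i ∈ Finset.Icc 1 k, β i) * M := (Finset.sum_mul ..).symm

end Recurrence

theorem converges_to_zero_general (k ℓ : ℕ)
    (hℓ1 : 1 ≤ ℓ) (hℓ2 : ℓ ≤ 2 * k) (A : ℝ) (β : ℕ → ℝ)
    (hβ : ∀ i, 0 ≤ β i)
    (hA1 : 1 + ∑ i ∈ Finset.Icc 1 k, β i ≤ A)
    (x : ℤ → ℝ) (hx0 : ∀ n : ℤ, n ≤ 0 → 0 < x n)
    (hrec : ∀ n : ℤ, 1 ≤ n → x n =
      ((∑ i ∈ Finset.Icc 1 k, β i * x (n - 2 * (i : ℤ))) + x (n - (ℓ : ℤ))) /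
      (A + x (n - (ℓ : ℤ)))) :
    Tendsto (fun n : ℕ => x (n : ℤ)) atTop (𝓝 0) := by
  have hB : 0 ≤ ∑ i ∈ Finset.Icc 1 k, β i := Finset.sum_nonneg fun i _ => hβ i
  have hA : 0 < A := by linarith
  have hrec' : SolvesRecurrence k ℓ A β x := hrec
  have hpos := hrec'.pos hβ hA.le hℓ1 hx0
  exact tendsto_zero_of_window_step (p := 2 * k)
    (fun n hn _ _ hwin => hrec'.le_recBound hβ hA hℓ1 hℓ2 hpos hn hwin)
    (fun _ hM => continuousAt_recBound hA hM) (fun _ hM => recBound_pos hA hB hM)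
    (fun _ hM => recBound_lt hB hA1 hM) (fun n => (hpos n).le)

/-- Every positive solution of `xₙ = (∑ β_{2i} x_{n-2i} + x_{n-ℓ})/(A + x_{n-ℓ})`
with `0 < ∑ β_{2i} < A` and `A ≥ 1 + ∑ β_{2i}` converges to `0`. -/
theorem converges_to_zero (k ℓ : ℕ) (hk : 1 ≤ k) (hℓodd : Odd ℓ)
    (hℓ1 : 1 ≤ ℓ) (hℓ2 : ℓ ≤ 2 * k) (A : ℝ) (β : ℕ → ℝ)
    (hβ : ∀ i, 0 ≤ β i)
    (hsumpos : 0 < ∑ i ∈ Finset.Icc 1 k, β i)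
    (hsumA : ∑ i ∈ Finset.Icc 1 k, β i < A)
    (hA1 : 1 + ∑ i ∈ Finset.Icc 1 k, β i ≤ A)
    (x : ℤ → ℝ) (hx0 : ∀ n : ℤ, n ≤ 0 → 0 < x n)
    (hrec : ∀ n : ℤ, 1 ≤ n → x n =
      ((∑ i ∈ Finset.Icc 1 k, β i * x (n - 2 * (i : ℤ))) + x (n - (ℓ : ℤ))) /
      (A + x (n - (ℓ : ℤ)))) :
    Tendsto (fun n : ℕ => x (n : ℤ)) atTop (𝓝 0) :=
  converges_to_zero_general k ℓ hℓ1 hℓ2 A β hβ hA1 x hx0 hrec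
end

section
/- Every positive solution of x_n = (Σ_{i=1}^k β_{2i} x_{n-2i} + x_{n-ℓ})/(A + x_{n-ℓ}) with 0 < Σβ_{2i} < A < 1 + Σβ_{2i} converges to the positive equilibrium Σβ_{2i} + 1 − A. -/
/-!
Write `S = ∑ βᵢ` and `x̄ = S + 1 - A`. If the last `2k` terms are at least some `m` with
`0 < m ≤ x̄`, then so is the next one; hence the solution stays above a positive `m`. Moreover
`xₙ - x̄ = (∑ βᵢ (x_{n-2i} - x̄) + (A - S) (x_{n-ℓ} - x̄)) / (A + x_{n-ℓ})`, whose nonnegative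
weights add up to `A` while the denominator is at least `A + m`. So the largest error over a block
of `2k` consecutive terms shrinks by the factor `A / (A + m) < 1` from one block to the next.
-/

open Filter Topology

theorem Int.induction_on_window {d : ℕ} {a : ℤ} {P : ℤ → Prop}
    (base : ∀ n, a - d ≤ n → n < a → P n)
    (step : ∀ n, a ≤ n → (∀ j : ℕ, 1 ≤ j → j ≤ d → P (n - j)) → P n) :
    ∀ n, a - d ≤ n → P n := by
  suffices h : ∀ m : ℕ, ∀ n, n < a - d + m → a - d ≤ n → P n from
    fun n hn => h (n - (a - d) + 1).toNat n (by omega) hn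
  intro m
  induction m with
  | zero => intro n h1 h2; omega
  | succ m ih =>
    intro n hlt hle
    rcases lt_or_ge n a with hna | han
    · exact base n hle hna
    · exact step n han fun j hj1 hjd => ih _ (by omega) (by omega)

theorem tendsto_zero_of_abs_le_mul_window {d : ℕ} (hd : 0 < d) {e : ℤ → ℝ} {ρ : ℝ}
    (hρ0 : 0 ≤ ρ) (hρ1 : ρ < 1)
    (step : ∀ n, 1 ≤ n → ∀ B, (∀ j : ℕ, 1 ≤ j → j ≤ d → |e (n - j)| ≤ B) → |e n| ≤ ρ * B) :
    Tendsto (fun n : ℕ => e n) atTop (𝓝 0) := by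
  set E := ∑ n ∈ Finset.Icc (1 - (d : ℤ)) 0, |e n|
  have hbase : ∀ n, 1 - (d : ℤ) ≤ n → n < 1 → |e n| ≤ E := fun n h1 h2 =>
    Finset.single_le_sum (f := fun n => |e n|) (fun _ _ => abs_nonneg _)
      (Finset.mem_Icc.mpr ⟨h1, by omega⟩)
  have hE : 0 ≤ E := (abs_nonneg _).trans (hbase 0 (by omega) one_pos)
  have hgeom : ∀ q : ℕ, ∀ n, 1 - (d : ℤ) + q * d ≤ n → |e n| ≤ ρ ^ q * E := by
    intro q
    induction q with
    | zero =>
      simp only [Nat.cast_zero, zero_mul, add_zero, pow_zero, one_mul]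
      refine Int.induction_on_window hbase fun n hn hwin => ?_
      calc |e n| ≤ ρ * E := step n hn E hwin
        _ ≤ E := mul_le_of_le_one_left hE hρ1.le
    | succ q ih =>
      intro n hn
      rw [pow_succ', mul_assoc]
      have hqd : (0 : ℤ) ≤ q * d := by positivity
      push_cast at hn
      exact step n (by linarith) _ fun j _ hjd => ih _ (by linarith)
  have hbound : ∀ n : ℕ, |e n| ≤ ρ ^ (n / d) * E := fun n =>
    hgeom (n / d) n (by
      have : ((n / d : ℕ) : ℤ) * d ≤ n := by exact_mod_cast Nat.div_mul_le_self n d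
      linarith)
  refine squeeze_zero_norm hbound ?_
  simpa using ((tendsto_pow_atTop_nhds_zero_of_lt_one hρ0 hρ1).comp
    (Nat.tendsto_div_const_atTop hd.ne')).mul_const E

section Recurrence

variable {ι : Type*} {s : Finset ι} {β u : ι → ℝ} {A v : ℝ}

theorem le_sum_mul_add_div_of_le (hβ : ∀ i ∈ s, 0 ≤ β i) (hSA : ∑ i ∈ s, β i ≤ A) {m : ℝ}
    (hm0 : 0 ≤ m) (hm : m ≤ ∑ i ∈ s, β i + 1 - A) (hu : ∀ i ∈ s, m ≤ u i) (hv : m ≤ v)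
    (hden : 0 < A + v) :
    m ≤ (∑ i ∈ s, β i * u i + v) / (A + v) := by
  have hsum : (∑ i ∈ s, β i) * m ≤ ∑ i ∈ s, β i * u i := by
    rw [Finset.sum_mul]
    exact Finset.sum_le_sum fun i hi => mul_le_mul_of_nonneg_left (hu i hi) (hβ i hi)
  rw [le_div_iff₀ hden]
  -- `m (A - S) ≤ m (1 - m) ≤ v (1 - m)`, since `A - S ≤ 1 - m`
  nlinarith [mul_le_mul_of_nonneg_left (show A - ∑ i ∈ s, β i ≤ 1 - m by linarith) hm0,
    mul_le_mul_of_nonneg_right hv (show 0 ≤ 1 - m by linarith)]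

theorem sum_mul_add_div_sub_eq (hden : A + v ≠ 0) :
    (∑ i ∈ s, β i * u i + v) / (A + v) - (∑ i ∈ s, β i + 1 - A) =
      (∑ i ∈ s, β i * (u i - (∑ i ∈ s, β i + 1 - A)) +
        (A - ∑ i ∈ s, β i) * (v - (∑ i ∈ s, β i + 1 - A))) / (A + v) := by
  simp only [mul_sub, Finset.sum_sub_distrib, ← Finset.sum_mul]
  field_simp
  ring

theorem abs_sum_mul_add_div_sub_le (hβ : ∀ i ∈ s, 0 ≤ β i) (hSA : ∑ i ∈ s, β i ≤ A) {m B : ℝ}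
    (hm : 0 < A + m) (hv : m ≤ v) (hu : ∀ i ∈ s, |u i - (∑ i ∈ s, β i + 1 - A)| ≤ B)
    (hvB : |v - (∑ i ∈ s, β i + 1 - A)| ≤ B) :
    |(∑ i ∈ s, β i * u i + v) / (A + v) - (∑ i ∈ s, β i + 1 - A)| ≤ A / (A + m) * B := by
  set c := ∑ i ∈ s, β i + 1 - A
  have hden : 0 < A + v := by linarith
  have hsum : |∑ i ∈ s, β i * (u i - c)| ≤ (∑ i ∈ s, β i) * B := by
    rw [Finset.sum_mul]
    refine (Finset.abs_sum_le_sum_abs _ _).trans (Finset.sum_le_sum fun i hi => ?_)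
    rw [abs_mul, abs_of_nonneg (hβ i hi)]
    exact mul_le_mul_of_nonneg_left (hu i hi) (hβ i hi)
  have hnum : |∑ i ∈ s, β i * (u i - c) + (A - ∑ i ∈ s, β i) * (v - c)| ≤ A * B :=
    calc _ ≤ |∑ i ∈ s, β i * (u i - c)| + |(A - ∑ i ∈ s, β i) * (v - c)| := abs_add_le _ _
      _ ≤ (∑ i ∈ s, β i) * B + (A - ∑ i ∈ s, β i) * B := by
        rw [abs_mul, abs_of_nonneg (sub_nonneg.mpr hSA)]
        exact add_le_add hsum (mul_le_mul_of_nonneg_left hvB (sub_nonneg.mpr hSA))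
      _ = A * B := by ring
  rw [sum_mul_add_div_sub_eq hden.ne', abs_div, abs_of_pos hden, div_mul_eq_mul_div]
  exact div_le_div₀ ((abs_nonneg _).trans hnum) hnum hm (by linarith)

end Recurrence

theorem exists_pos_forall_le_of_recurrence {k ℓ : ℕ} (hℓ1 : 1 ≤ ℓ) (hℓ2 : ℓ ≤ 2 * k) {A : ℝ}
    {β : ℕ → ℝ} (hβ : ∀ i, 0 ≤ β i) (hsumA : ∑ i ∈ Finset.Icc 1 k, β i < A)
    (hA1 : A < 1 + ∑ i ∈ Finset.Icc 1 k, β i) {x : ℤ → ℝ} (hx0 : ∀ n : ℤ, n ≤ 0 → 0 < x n)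
    (hrec : ∀ n : ℤ, 1 ≤ n → x n =
      ((∑ i ∈ Finset.Icc 1 k, β i * x (n - 2 * (i : ℤ))) + x (n - (ℓ : ℤ))) /
      (A + x (n - (ℓ : ℤ)))) :
    ∃ m, 0 < m ∧ ∀ n, 1 - 2 * (k : ℤ) ≤ n → m ≤ x n := by
  have hA : 0 < A := (Finset.sum_nonneg fun i _ => hβ i).trans_lt hsumA
  obtain ⟨n₀, hn₀, hmin⟩ := (Finset.Icc (1 - 2 * (k : ℤ)) 0).exists_min_image x
    ⟨0, Finset.mem_Icc.mpr ⟨by omega, le_rfl⟩⟩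
  set m := min (∑ i ∈ Finset.Icc 1 k, β i + 1 - A) (x n₀)
  have hm : 0 < m := lt_min (by linarith) (hx0 n₀ (Finset.mem_Icc.mp hn₀).2)
  refine ⟨m, hm, fun n hn => Int.induction_on_window (d := 2 * k) (a := 1)
    (P := fun n => m ≤ x n)
    (fun n h1 h2 => (min_le_right _ _).trans (hmin n (Finset.mem_Icc.mpr ⟨by omega, by omega⟩)))
    (fun n hn1 hwin => ?_) n (by omega)⟩
  have hv : m ≤ x (n - ℓ) := hwin ℓ hℓ1 hℓ2
  rw [hrec n hn1]
  refine le_sum_mul_add_div_of_le (fun i _ => hβ i) hsumA.le hm.le (min_le_left _ _)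
    (fun i hi => ?_) hv (by linarith)
  have hi := Finset.mem_Icc.mp hi
  simpa using hwin (2 * i) (by omega) (by omega)

theorem converges_to_positive_equilibrium_general (k ℓ : ℕ)
    (hℓ1 : 1 ≤ ℓ) (hℓ2 : ℓ ≤ 2 * k) (A : ℝ) (β : ℕ → ℝ)
    (hβ : ∀ i, 0 ≤ β i)
    (hsumA : ∑ i ∈ Finset.Icc 1 k, β i < A)
    (hA1 : A < 1 + ∑ i ∈ Finset.Icc 1 k, β i)
    (x : ℤ → ℝ) (hx0 : ∀ n : ℤ, n ≤ 0 → 0 < x n)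
    (hrec : ∀ n : ℤ, 1 ≤ n → x n =
      ((∑ i ∈ Finset.Icc 1 k, β i * x (n - 2 * (i : ℤ))) + x (n - (ℓ : ℤ))) /
      (A + x (n - (ℓ : ℤ)))) :
    Tendsto (fun n : ℕ => x (n : ℤ)) atTop
      (𝓝 ((∑ i ∈ Finset.Icc 1 k, β i) + 1 - A)) := by
  have hA : 0 < A := (Finset.sum_nonneg fun i _ => hβ i).trans_lt hsumA
  obtain ⟨m, hm, hlow⟩ := exists_pos_forall_le_of_recurrence hℓ1 hℓ2 hβ hsumA hA1 hx0 hrec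
  refine tendsto_sub_nhds_zero_iff.mp <| tendsto_zero_of_abs_le_mul_window (d := 2 * k)
    (e := fun n => x n - (∑ i ∈ Finset.Icc 1 k, β i + 1 - A)) (ρ := A / (A + m))
    (by omega) (by positivity) ((div_lt_one (by linarith)).mpr (by linarith))
    fun n hn B hwin => ?_
  rw [hrec n hn]
  refine abs_sum_mul_add_div_sub_le (fun i _ => hβ i) hsumA.le (by linarith)
    (hlow _ (by omega)) (fun i hi => ?_) (hwin ℓ hℓ1 hℓ2)
  have hi := Finset.mem_Icc.mp hi
  simpa using hwin (2 * i) (by omega) (by omega)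

/-- Every positive solution of `xₙ = (∑ β_{2i} x_{n-2i} + x_{n-ℓ})/(A + x_{n-ℓ})`
with `0 < ∑ β_{2i} < A < 1 + ∑ β_{2i}` converges to the positive equilibrium
`∑ β_{2i} + 1 - A`. -/
theorem converges_to_positive_equilibrium (k ℓ : ℕ) (hk : 1 ≤ k) (hℓodd : Odd ℓ)
    (hℓ1 : 1 ≤ ℓ) (hℓ2 : ℓ ≤ 2 * k) (A : ℝ) (β : ℕ → ℝ)
    (hβ : ∀ i, 0 ≤ β i)
    (hsumpos : 0 < ∑ i ∈ Finset.Icc 1 k, β i)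
    (hsumA : ∑ i ∈ Finset.Icc 1 k, β i < A)
    (hA1 : A < 1 + ∑ i ∈ Finset.Icc 1 k, β i)
    (x : ℤ → ℝ) (hx0 : ∀ n : ℤ, n ≤ 0 → 0 < x n)
    (hrec : ∀ n : ℤ, 1 ≤ n → x n =
      ((∑ i ∈ Finset.Icc 1 k, β i * x (n - 2 * (i : ℤ))) + x (n - (ℓ : ℤ))) /
      (A + x (n - (ℓ : ℤ)))) :
    Tendsto (fun n : ℕ => x (n : ℤ)) atTop
      (𝓝 ((∑ i ∈ Finset.Icc 1 k, β i) + 1 - A)) :=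
  converges_to_positive_equilibrium_general k ℓ hℓ1 hℓ2 A β hβ hsumA hA1 x hx0 hrec
end

section
/- Every positive solution of x_n = (Σ_{i=1}^k β_{2i} x_{n-2i} + x_{n-ℓ})/(A + x_{n-ℓ}) with 0 < A = Σ_{i=1}^k β_{2i} converges to 1: the solution has a positive lower bound L (the minimum of 1 and the initial conditions), and |x_n − 1| ≤ (Σβ_{2i} / (Σβ_{2i} + L)) · max_{i=1..k} |x_{n-2i} − 1|, which forces x_n → 1. -/
/-!
Writing `A = ∑ β_{2i}`, the recurrence gives
`x_n - 1 = ∑ β_{2i} (x_{n-2i} - 1) / (A + x_{n-ℓ})`. Since `ℓ ≤ 2k`, every term the recurrence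
reads lies in the window of the `2k` preceding terms, and a window induction shows that
`L = min (1, initial conditions)` bounds the whole solution from below. Hence
`|x_n - 1| ≤ A / (A + L) · max_i |x_{n-2i} - 1|`, a contraction by a fixed factor `< 1` over
every window of length `2k`, so the deviations decay geometrically.
-/

open Filter Topology

theorem induction_from_window {P : ℤ → Prop} (d : ℕ)
    (init : ∀ n, 1 - (d : ℤ) ≤ n → n ≤ 0 → P n)
    (step : ∀ n : ℤ, 1 ≤ n → (∀ m : ℤ, n - d ≤ m → m < n → P m) → P n) :
    ∀ n, 1 - (d : ℤ) ≤ n → P n := by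
  suffices h : ∀ N : ℕ, ∀ n : ℤ, 1 - (d : ℤ) ≤ n → n ≤ N → P n from
    fun n hn => h n.toNat n hn (Int.self_le_toNat n)
  intro N
  induction N with
  | zero => exact fun n h₁ h₂ => init n h₁ (by exact_mod_cast h₂)
  | succ N ih =>
    intro n h₁ h₂
    rcases le_or_gt n 0 with h | h
    · exact init n h₁ h
    · exact step n h fun m hm₁ hm₂ => ih m (by omega) (by omega)

theorem tendsto_zero_of_abs_le_mul_window_s17 {u : ℤ → ℝ} {r : ℝ} (d : ℕ) (hr₀ : 0 ≤ r)
    (hr₁ : r < 1)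
    (step : ∀ n : ℤ, 1 ≤ n → ∀ C, 0 ≤ C → (∀ m : ℤ, n - d ≤ m → m < n → |u m| ≤ C) →
      |u n| ≤ r * C) :
    Tendsto (fun n : ℕ => u n) atTop (𝓝 0) := by
  set B := ∑ n ∈ Finset.Icc (1 - (d : ℤ)) 0, |u n|
  have hB : 0 ≤ B := Finset.sum_nonneg fun _ _ => abs_nonneg _
  have bounded : ∀ n, 1 - (d : ℤ) ≤ n → |u n| ≤ B :=
    induction_from_window d
      (fun n h₁ h₂ => Finset.single_le_sum (f := fun n => |u n|) (fun _ _ => abs_nonneg _)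
        (Finset.mem_Icc.2 ⟨h₁, h₂⟩))
      fun n hn h => (step n hn B hB h).trans (mul_le_of_le_one_left hB hr₁.le)
  have decay : ∀ m : ℕ, ∀ n : ℤ, 1 - d + d * m ≤ n → |u n| ≤ r ^ m * B := by
    intro m
    induction m with
    | zero => simpa using bounded
    | succ m ih =>
      intro n hn
      have hdm : (0 : ℤ) ≤ d * m := by positivity
      push_cast at hn
      rw [pow_succ', mul_assoc]
      exact step n (by linarith) _ (by positivity) fun j hj _ => ih j (by linarith)
  have hgeom : Tendsto (fun m : ℕ => r ^ m * B) atTop (𝓝 0) := by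
    simpa using (tendsto_pow_atTop_nhds_zero_of_lt_one hr₀ hr₁).mul_const B
  rw [Metric.tendsto_atTop]
  intro ε hε
  obtain ⟨m, hm⟩ := (hgeom.eventually (gt_mem_nhds hε)).exists
  refine ⟨d * m + 1, fun n hn => ?_⟩
  have hn' : ((d * m + 1 : ℕ) : ℤ) ≤ n := by exact_mod_cast hn
  push_cast at hn'
  rw [Real.dist_eq, sub_zero]
  exact (decay m n (by linarith)).trans_lt hm

theorem exists_pos_le_one_forall_le {ι : Type*} (s : Finset ι) (f : ι → ℝ)
    (hf : ∀ i ∈ s, 0 < f i) : ∃ L, 0 < L ∧ L ≤ 1 ∧ ∀ i ∈ s, L ≤ f i := by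
  refine ⟨(insert 1 (s.image f)).min' (Finset.insert_nonempty _ _), ?_,
    Finset.min'_le _ _ (Finset.mem_insert_self _ _),
    fun i hi => Finset.min'_le _ _ (Finset.mem_insert_of_mem (Finset.mem_image_of_mem f hi))⟩
  refine (Finset.lt_min'_iff _ _).2 fun y hy => ?_
  simp only [Finset.mem_insert, Finset.mem_image] at hy
  rcases hy with rfl | ⟨i, hi, rfl⟩
  exacts [one_pos, hf i hi]

section WeightedMean

variable {ι : Type*} {s : Finset ι} {β a : ι → ℝ} {y L : ℝ}

theorem le_weighted_div_of_forall_le (hβ : ∀ i ∈ s, 0 ≤ β i) (ha : ∀ i ∈ s, L ≤ a i)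
    (hL : L ≤ 1) (hy : 0 < y) :
    L ≤ (∑ i ∈ s, β i * a i + y) / (∑ i ∈ s, β i + y) := by
  have hA : 0 ≤ ∑ i ∈ s, β i := Finset.sum_nonneg hβ
  have hsum : L * ∑ i ∈ s, β i ≤ ∑ i ∈ s, β i * a i := by
    rw [Finset.mul_sum]
    exact Finset.sum_le_sum fun i hi => by nlinarith [ha i hi, hβ i hi]
  rw [le_div_iff₀ (by positivity)]
  nlinarith

theorem abs_weighted_div_sub_one_le {C : ℝ} (hβ : ∀ i ∈ s, 0 ≤ β i)
    (ha : ∀ i ∈ s, |a i - 1| ≤ C) (hL : 0 < L) (hy : L ≤ y) :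
    |(∑ i ∈ s, β i * a i + y) / (∑ i ∈ s, β i + y) - 1| ≤
      (∑ i ∈ s, β i) / (∑ i ∈ s, β i + L) * C := by
  set A := ∑ i ∈ s, β i
  have hA : 0 ≤ A := Finset.sum_nonneg hβ
  have hden : 0 < A + y := by linarith
  have hdev : (∑ i ∈ s, β i * a i + y) / (A + y) - 1 =
      (∑ i ∈ s, β i * (a i - 1)) / (A + y) := by
    rw [div_sub_one hden.ne']
    simp only [A, mul_sub, mul_one, Finset.sum_sub_distrib]
    ring
  have hnum : |∑ i ∈ s, β i * (a i - 1)| ≤ A * C :=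
    calc |∑ i ∈ s, β i * (a i - 1)|
        ≤ ∑ i ∈ s, |β i * (a i - 1)| := Finset.abs_sum_le_sum_abs _ _
      _ ≤ ∑ i ∈ s, β i * C := Finset.sum_le_sum fun i hi => by
          rw [abs_mul, abs_of_nonneg (hβ i hi)]
          exact mul_le_mul_of_nonneg_left (ha i hi) (hβ i hi)
      _ = A * C := (Finset.sum_mul _ _ _).symm
  have hAC : 0 ≤ A * C := (abs_nonneg _).trans hnum
  calc |(∑ i ∈ s, β i * a i + y) / (A + y) - 1|
      = |∑ i ∈ s, β i * (a i - 1)| / (A + y) := by rw [hdev, abs_div, abs_of_pos hden]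
    _ ≤ A * C / (A + y) := by gcongr
    _ ≤ A * C / (A + L) := by gcongr
    _ = A / (A + L) * C := div_mul_eq_mul_div _ _ _ |>.symm

end WeightedMean

theorem converges_to_one_general (k ℓ : ℕ)
    (hℓ1 : 1 ≤ ℓ) (hℓ2 : ℓ ≤ 2 * k) (A : ℝ) (β : ℕ → ℝ)
    (hβ : ∀ i, 0 ≤ β i)
    (hsumA : A = ∑ i ∈ Finset.Icc 1 k, β i)
    (x : ℤ → ℝ) (hx0 : ∀ n : ℤ, n ≤ 0 → 0 < x n)
    (hrec : ∀ n : ℤ, 1 ≤ n → x n =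
      ((∑ i ∈ Finset.Icc 1 k, β i * x (n - 2 * (i : ℤ))) + x (n - (ℓ : ℤ))) /
      (A + x (n - (ℓ : ℤ)))) :
    Tendsto (fun n : ℕ => x (n : ℤ)) atTop (𝓝 1) := by
  subst hsumA
  have lag_two_mul_mem : ∀ n : ℤ, ∀ i ∈ Finset.Icc 1 k,
      n - ((2 * k : ℕ) : ℤ) ≤ n - 2 * (i : ℤ) ∧ n - 2 * (i : ℤ) < n := fun n i hi => by
    have := Finset.mem_Icc.1 hi
    omega
  have lag_ℓ_mem : ∀ n : ℤ, n - ((2 * k : ℕ) : ℤ) ≤ n - ℓ ∧ n - ℓ < n := fun n => by omega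
  obtain ⟨L, hL₀, hL₁, hL⟩ := exists_pos_le_one_forall_le (Finset.Icc (1 - 2 * (k : ℤ)) 0) x
    fun n hn => hx0 n (Finset.mem_Icc.1 hn).2
  have lower : ∀ n : ℤ, 1 - ((2 * k : ℕ) : ℤ) ≤ n → L ≤ x n := by
    refine induction_from_window (2 * k)
      (fun n h₁ h₂ => hL n (Finset.mem_Icc.2 ⟨by omega, h₂⟩)) fun n hn h => ?_
    rw [hrec n hn]
    exact le_weighted_div_of_forall_le (fun i _ => hβ i)
      (fun i hi => h _ (lag_two_mul_mem n i hi).1 (lag_two_mul_mem n i hi).2) hL₁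
      (hL₀.trans_le (h _ (lag_ℓ_mem n).1 (lag_ℓ_mem n).2))
  have contraction : ∀ n : ℤ, 1 ≤ n → ∀ C, 0 ≤ C →
      (∀ m : ℤ, n - ((2 * k : ℕ) : ℤ) ≤ m → m < n → |x m - 1| ≤ C) →
      |x n - 1| ≤ (∑ i ∈ Finset.Icc 1 k, β i) / (∑ i ∈ Finset.Icc 1 k, β i + L) * C := by
    intro n hn C _ h
    rw [hrec n hn]
    exact abs_weighted_div_sub_one_le (fun i _ => hβ i)
      (fun i hi => h _ (lag_two_mul_mem n i hi).1 (lag_two_mul_mem n i hi).2) hL₀ (lower _ (by omega))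
  have hA : 0 ≤ ∑ i ∈ Finset.Icc 1 k, β i := Finset.sum_nonneg fun i _ => hβ i
  simpa using (tendsto_zero_of_abs_le_mul_window_s17 (u := fun n => x n - 1) (2 * k)
    (by positivity) ((div_lt_one (by linarith)).2 (by linarith)) contraction).add_const 1

/-- Every positive solution of `xₙ = (∑ β_{2i} x_{n-2i} + x_{n-ℓ})/(A + x_{n-ℓ})`
with `0 < A = ∑ β_{2i}` converges to `1`. -/
theorem converges_to_one (k ℓ : ℕ) (hk : 1 ≤ k) (hℓodd : Odd ℓ)
    (hℓ1 : 1 ≤ ℓ) (hℓ2 : ℓ ≤ 2 * k) (A : ℝ) (β : ℕ → ℝ)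
    (hβ : ∀ i, 0 ≤ β i) (hA : 0 < A)
    (hsumA : A = ∑ i ∈ Finset.Icc 1 k, β i)
    (x : ℤ → ℝ) (hx0 : ∀ n : ℤ, n ≤ 0 → 0 < x n)
    (hrec : ∀ n : ℤ, 1 ≤ n → x n =
      ((∑ i ∈ Finset.Icc 1 k, β i * x (n - 2 * (i : ℤ))) + x (n - (ℓ : ℤ))) /
      (A + x (n - (ℓ : ℤ)))) :
    Tendsto (fun n : ℕ => x (n : ℤ)) atTop (𝓝 1) :=
  converges_to_one_general k ℓ hℓ1 hℓ2 A β hβ hsumA x hx0 hrec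
end

section
/- If 0 < A < Σ_{i=1}^k β_{2i}, then every positive solution of x_n = (Σ_{i=1}^k β_{2i} x_{n-2i} + x_{n-ℓ})/(A + x_{n-ℓ}) satisfies x_n > 1 for all sufficiently large n. -/
/-!
The recurrence is a mediant: with `S = ∑ β_{2i} x_{n-2i}` and `y = x_{n-ℓ} > 0`,
`xₙ = (S + y) / (A + y) ≥ min (S / A) 1`. If the `L ≥ max (2k, ℓ)` terms preceding `xₙ` are all
at least `d`, then `S ≥ B d` with `B = ∑ β_{2i}`, so `xₙ ≥ min (r d) 1` where `r = B / A > 1`.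
Starting from the minimum of the initial values, this bounds the solution below by a positive
constant, and then each further window of length `L` multiplies the lower bound by `r` until it
reaches `1`. Once a whole window is `≥ 1`, `S ≥ B > A` makes the mediant strictly greater than `1`.
-/

open Finset

theorem min_div_one_le_add_div_add {K : Type*} [Field K] [LinearOrder K] [IsStrictOrderedRing K]
    {s A y : K} (hA : 0 < A) (hy : 0 ≤ y) :
    min (s / A) 1 ≤ (s + y) / (A + y) := by
  have hAy : 0 < A + y := by linarith
  rcases le_or_gt s A with hsA | hAs
  · refine (min_le_left _ _).trans ?_
    rw [div_le_div_iff₀ hA hAy]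
    nlinarith
  · exact (min_le_right _ _).trans ((one_le_div hAy).2 (by linarith))

def AmplifiesLowerBounds (x : ℤ → ℝ) (L : ℕ) (r : ℝ) : Prop :=
  ∀ d > 0, ∀ n : ℤ, 1 ≤ n → (∀ m ∈ Set.Ico (n - L) n, d ≤ x m) → min (r * d) 1 ≤ x n

namespace AmplifiesLowerBounds

variable {x : ℤ → ℝ} {L : ℕ} {r : ℝ}

theorem exists_pos_le (h : AmplifiesLowerBounds x L r) (hr : 1 ≤ r) (hL : 0 < L)
    (hx0 : ∀ n ≤ 0, 0 < x n) : ∃ c > 0, ∀ n ≥ 1 - (L : ℤ), c ≤ x n := by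
  obtain ⟨m₀, hm₀, hmin⟩ := (Icc (1 - L : ℤ) 0).exists_min_image x ⟨0, by simp; omega⟩
  set c := min (x m₀) 1
  have hc : 0 < c := lt_min (hx0 m₀ (mem_Icc.1 hm₀).2) one_pos
  have hbound : ∀ n ≥ (0 : ℤ), ∀ m ∈ Set.Icc (1 - L : ℤ) n, c ≤ x m := by
    intro n hn
    induction n, hn using Int.leInduction with
    | base => exact fun m hm => (min_le_left _ _).trans (hmin m (by simpa using hm))
    | succ n hn ih =>
      intro m ⟨hm₁, hm₂⟩
      rcases hm₂.lt_or_eq with hlt | rfl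
      · exact ih m ⟨hm₁, by omega⟩
      · have hwin : ∀ m ∈ Set.Ico (n + 1 - L) (n + 1), c ≤ x m :=
          fun p ⟨hp₁, hp₂⟩ => ih p ⟨by omega, by omega⟩
        calc c = min c 1 := (min_eq_left (min_le_right _ _)).symm
          _ ≤ min (r * c) 1 := min_le_min_right _ (le_mul_of_one_le_left hc.le hr)
          _ ≤ x (n + 1) := h c hc (n + 1) (by omega) hwin
  exact ⟨c, hc, fun n hn => hbound (max n 0) (le_max_right _ _) n
    ⟨hn, le_max_left _ _⟩⟩

theorem min_pow_mul_le (h : AmplifiesLowerBounds x L r) (hr : 1 ≤ r) {d : ℝ} (hd : 0 < d)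
    {n₀ : ℤ} (hn₀ : 1 ≤ n₀ + L) (hx : ∀ n ≥ n₀, d ≤ x n) (j : ℕ) :
    ∀ n ≥ n₀ + L * j, min (r ^ j * d) 1 ≤ x n := by
  induction j with
  | zero => exact fun n hn => by simpa using (min_le_left _ _).trans (hx n (by simpa using hn))
  | succ j ih =>
    intro n hn
    have hLj : (0 : ℤ) ≤ L * j := by positivity
    have he : 0 < min (r ^ j * d) 1 := lt_min (by positivity) one_pos
    -- `r * min (r ^ j * d) 1 = min (r ^ (j + 1) * d) r` and `r ≥ 1`
    have hgrow : min (r ^ (j + 1) * d) 1 ≤ min (r * min (r ^ j * d) 1) 1 := by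
      rcases le_total (r ^ j * d) 1 with hle | hle
      · rw [min_eq_left hle, pow_succ', mul_assoc]
      · rw [min_eq_right hle, mul_one, min_eq_right hr]
        exact min_le_right _ _
    refine hgrow.trans (h _ he n (by push_cast at hn; nlinarith) fun m ⟨hm₁, _⟩ => ih m ?_)
    push_cast at hn
    linarith

theorem eventually_one_le (h : AmplifiesLowerBounds x L r) (hr : 1 < r) (hL : 0 < L)
    (hx0 : ∀ n ≤ 0, 0 < x n) : ∃ N, ∀ n ≥ N, 1 ≤ x n := by
  obtain ⟨c, hc, hcx⟩ := h.exists_pos_le hr.le hL hx0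
  obtain ⟨J, hJ⟩ := pow_unbounded_of_one_lt c⁻¹ hr
  have hJc : 1 ≤ r ^ J * c := by
    rw [inv_lt_iff_one_lt_mul₀ hc] at hJ
    exact hJ.le
  refine ⟨1 - L + L * J, fun n hn => ?_⟩
  simpa [min_eq_right hJc] using h.min_pow_mul_le hr.le hc (by omega) hcx J n hn

end AmplifiesLowerBounds

theorem sum_mul_le_sum_of_window {k L : ℕ} {β : ℕ → ℝ} {x : ℤ → ℝ} {n : ℤ} {d : ℝ}
    (hβ : ∀ i, 0 ≤ β i) (hkL : 2 * k ≤ L) (hd : ∀ m ∈ Set.Ico (n - L) n, d ≤ x m) :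
    (∑ i ∈ Icc 1 k, β i) * d ≤ ∑ i ∈ Icc 1 k, β i * x (n - 2 * (i : ℤ)) := by
  rw [sum_mul]
  refine sum_le_sum fun i hi => mul_le_mul_of_nonneg_left (hd _ ⟨?_, ?_⟩) (hβ i)
  all_goals have := mem_Icc.1 hi; omega

theorem amplifiesLowerBounds_of_recurrence {k ℓ L : ℕ} {A : ℝ} {β : ℕ → ℝ} {x : ℤ → ℝ}
    (hℓ1 : 1 ≤ ℓ) (hℓL : ℓ ≤ L) (hkL : 2 * k ≤ L) (hβ : ∀ i, 0 ≤ β i) (hA : 0 < A)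
    (hrec : ∀ n : ℤ, 1 ≤ n → x n =
      ((∑ i ∈ Icc 1 k, β i * x (n - 2 * (i : ℤ))) + x (n - (ℓ : ℤ))) /
      (A + x (n - (ℓ : ℤ)))) :
    AmplifiesLowerBounds x L ((∑ i ∈ Icc 1 k, β i) / A) := by
  intro d hd n hn hwin
  have hy : 0 < x (n - ℓ) := hd.trans_le (hwin _ ⟨by omega, by omega⟩)
  have hS := sum_mul_le_sum_of_window hβ hkL hwin
  rw [hrec n hn, div_mul_eq_mul_div]
  exact (min_le_min_right _ (div_le_div_of_nonneg_right hS hA.le)).trans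
    (min_div_one_le_add_div_add hA hy.le)

theorem eventually_greater_than_one_general (k ℓ : ℕ)
    (hℓ1 : 1 ≤ ℓ) (A : ℝ) (β : ℕ → ℝ)
    (hβ : ∀ i, 0 ≤ β i) (hA : 0 < A)
    (hsumA : A < ∑ i ∈ Finset.Icc 1 k, β i)
    (x : ℤ → ℝ) (hx0 : ∀ n : ℤ, n ≤ 0 → 0 < x n)
    (hrec : ∀ n : ℤ, 1 ≤ n → x n =
      ((∑ i ∈ Finset.Icc 1 k, β i * x (n - 2 * (i : ℤ))) + x (n - (ℓ : ℤ))) /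
      (A + x (n - (ℓ : ℤ)))) :
    ∃ N : ℤ, ∀ n : ℤ, N ≤ n → 1 < x n := by
  set L := max (2 * k) ℓ
  have hamp := amplifiesLowerBounds_of_recurrence hℓ1 (le_max_right _ _) (le_max_left _ _) hβ hA hrec
  obtain ⟨N, hN⟩ := hamp.eventually_one_le ((one_lt_div hA).2 hsumA) (by omega) hx0
  refine ⟨max N 1 + L, fun n hn => ?_⟩
  have hwin : ∀ m ∈ Set.Ico (n - L) n, 1 ≤ x m := fun m ⟨hm, _⟩ => hN m (by omega)
  have hS := sum_mul_le_sum_of_window hβ (le_max_left _ _) hwin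
  have hy : 1 ≤ x (n - ℓ) := hwin _ ⟨by omega, by omega⟩
  rw [hrec n (by omega), one_lt_div (by linarith)]
  linarith

/-- If `0 < A < ∑ β_{2i}`, every positive solution of
`xₙ = (∑ β_{2i} x_{n-2i} + x_{n-ℓ})/(A + x_{n-ℓ})` satisfies `xₙ > 1` for all
sufficiently large `n`. -/
theorem eventually_greater_than_one (k ℓ : ℕ) (hk : 1 ≤ k) (hℓodd : Odd ℓ)
    (hℓ1 : 1 ≤ ℓ) (hℓ2 : ℓ ≤ 2 * k) (A : ℝ) (β : ℕ → ℝ)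
    (hβ : ∀ i, 0 ≤ β i) (hA : 0 < A)
    (hsumA : A < ∑ i ∈ Finset.Icc 1 k, β i)
    (x : ℤ → ℝ) (hx0 : ∀ n : ℤ, n ≤ 0 → 0 < x n)
    (hrec : ∀ n : ℤ, 1 ≤ n → x n =
      ((∑ i ∈ Finset.Icc 1 k, β i * x (n - 2 * (i : ℤ))) + x (n - (ℓ : ℤ))) /
      (A + x (n - (ℓ : ℤ)))) :
    ∃ N : ℤ, ∀ n : ℤ, N ≤ n → 1 < x n :=
  eventually_greater_than_one_general k ℓ hℓ1 A β hβ hA hsumA x hx0 hrec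
end
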